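/- arXiv:2410.07645 — 17 statements merged into one kernel-verified Lean document; each statement's English description precedes it below -/
import Mathlib

section
/- Let G be a square commutative group. Then for all a, b ∈ G the following relations hold: (a*b)^2 = (b*a)^2, a^2*b = b*a^2, and b^2*a = a*b^2. -/
theorem stmt_1 {G : Type*} [Group G]
    (hG : ∀ x y : G, (x * y) ^ 2 = (y * x) ^ 2) :
    ∀ a b : G, (a * b) ^ 2 = (b * a) ^ 2 ∧ a ^ 2 * b = b * a ^ 2 ∧ b ^ 2 * a = a * b ^ 2 := by
  have key : ∀ a b : G, b ^ 2 * a = a * b ^ 2 := by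
    intro a b
    have h := hG a (a⁻¹ * b)
    simp only [pow_two] at h ⊢
    group at h ⊢
    calc b * b * a = a * (a ^ (-1 : ℤ) * b * b * a) := by group
      _ = a * (b * b) := by rw [← h]
      _ = a * b * b := by group
  intro a b
  exact ⟨hG a b, (key b a).symm ▸ rfl, key a b⟩
end

section
/- Let G be a group generated by two elements a and b (i.e. Subgroup.closure {a, b} = ⊤). If a*b^2 = b^2*a, b*a^2 = a^2*b and (a*b)^2 = (b*a)^2, then (1) every element g of G can be written as g = c*z where c ∈ {1, a, b, a*b} and z lies in the center of G, and (2) G is square commutative. -/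
theorem stmt_2 {G : Type*} [Group G] (a b : G)
    (hgen : Subgroup.closure ({a, b} : Set G) = ⊤)
    (h1 : a * b ^ 2 = b ^ 2 * a) (h2 : b * a ^ 2 = a ^ 2 * b)
    (h3 : (a * b) ^ 2 = (b * a) ^ 2) :
    (∀ g : G, ∃ c z : G, c ∈ ({1, a, b, a * b} : Set G) ∧
        z ∈ Subgroup.center G ∧ g = c * z) ∧
    (∀ x y : G, (x * y) ^ 2 = (y * x) ^ 2) := by
  -- a criterion for centrality
  have hcent : ∀ z : G, z * a = a * z → z * b = b * z → z ∈ Subgroup.center G := by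
    intro z hza hzb
    rw [Subgroup.mem_center_iff]
    intro g
    have hg : g ∈ Subgroup.closure ({a, b} : Set G) := by rw [hgen]; trivial
    induction hg using Subgroup.closure_induction with
    | mem x hx =>
      rcases hx with h | h
      · rw [h]; exact hza.symm
      · rw [h]; exact hzb.symm
    | one => simp
    | mul x y _ _ ihx ihy => rw [mul_assoc, ihy, ← mul_assoc, ihx, mul_assoc]
    | inv x _ ihx =>
      have h := congrArg (fun g => x⁻¹ * g * x⁻¹) ihx
      simpa [mul_assoc] using h.symm
  have ha2 : a ^ 2 ∈ Subgroup.center G := hcent _ (by simp [pow_two, mul_assoc]) h2.symm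
  have hb2 : b ^ 2 ∈ Subgroup.center G := hcent _ h1.symm (by simp [pow_two, mul_assoc])
  have hab2 : (a * b) ^ 2 ∈ Subgroup.center G := by
    refine hcent _ ?_ ?_
    · nth_rewrite 2 [h3]; simp [pow_two, mul_assoc]
    · nth_rewrite 1 [h3]; simp [pow_two, mul_assoc]
  -- the "commutator" of b and a is central
  have hw : (a * b)⁻¹ * (b * a) ∈ Subgroup.center G := by
    have heq : (a * b)⁻¹ * (b * a) = ((a * b) ^ 2)⁻¹ * (b ^ 2 * a ^ 2) := by
      have h4 : b ^ 2 * a ^ 2 = (a * b) * (b * a) := by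
        calc b ^ 2 * a ^ 2 = (b ^ 2 * a) * a := by simp [pow_two, mul_assoc]
        _ = (a * b ^ 2) * a := by rw [h1]
        _ = (a * b) * (b * a) := by simp [pow_two, mul_assoc]
      rw [h4]
      simp [pow_two, mul_assoc]
    rw [heq]
    exact mul_mem (inv_mem hab2) (mul_mem hb2 ha2)
  set Z := Subgroup.center G with hZ
  have hm1 : (1 : G) ∈ ({1, a, b, a * b} : Set G) := by simp
  have hma : a ∈ ({1, a, b, a * b} : Set G) := by simp
  have hmb : b ∈ ({1, a, b, a * b} : Set G) := by simp
  have hmab : a * b ∈ ({1, a, b, a * b} : Set G) := by simp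
  -- product table on coset representatives
  have table : ∀ c₁ ∈ ({1, a, b, a * b} : Set G), ∀ c₂ ∈ ({1, a, b, a * b} : Set G),
      ∃ c₃ z, c₃ ∈ ({1, a, b, a * b} : Set G) ∧ z ∈ Z ∧ c₁ * c₂ = c₃ * z := by
    rintro c₁ hc₁ c₂ hc₂
    rcases hc₁ with e₁ | e₁ | e₁ | e₁ <;> rcases hc₂ with e₂ | e₂ | e₂ | e₂ <;> rw [e₁, e₂]
    · exact ⟨1, 1, hm1, one_mem _, by simp⟩
    · exact ⟨a, 1, hma, one_mem _, by simp⟩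
    · exact ⟨b, 1, hmb, one_mem _, by simp⟩
    · exact ⟨a * b, 1, hmab, one_mem _, by simp⟩
    · exact ⟨a, 1, hma, one_mem _, by simp⟩
    · exact ⟨1, a ^ 2, hm1, ha2, by simp [pow_two, mul_assoc]⟩
    · exact ⟨a * b, 1, hmab, one_mem _, by simp⟩
    · refine ⟨b, a ^ 2, hmb, ha2, ?_⟩
      calc a * (a * b) = a ^ 2 * b := by simp [pow_two, mul_assoc]
      _ = b * a ^ 2 := h2.symm
    · exact ⟨b, 1, hmb, one_mem _, by simp⟩
    · exact ⟨a * b, (a * b)⁻¹ * (b * a), hmab, hw, by simp [mul_assoc]⟩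
    · exact ⟨1, b ^ 2, hm1, hb2, by simp [pow_two, mul_assoc]⟩
    · exact ⟨a, (a ^ 2)⁻¹ * (a * b) ^ 2, hma,
        mul_mem (inv_mem ha2) hab2, by simp [pow_two, mul_assoc]⟩
    · exact ⟨a * b, 1, hmab, one_mem _, by simp⟩
    · exact ⟨b, (b ^ 2)⁻¹ * (a * b) ^ 2, hmb,
        mul_mem (inv_mem hb2) hab2, by rw [h3]; simp [pow_two, mul_assoc]⟩
    · exact ⟨a, b ^ 2, hma, hb2, by simp [pow_two, mul_assoc]⟩
    · exact ⟨1, (a * b) ^ 2, hm1, hab2, by simp [pow_two, mul_assoc]⟩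
  -- the subgroup of decomposable elements
  let S : Subgroup G :=
    { carrier := {g | ∃ c z : G, c ∈ ({1, a, b, a * b} : Set G) ∧ z ∈ Z ∧ g = c * z}
      one_mem' := ⟨1, 1, hm1, one_mem _, by simp⟩
      mul_mem' := by
        rintro x y ⟨c₁, z₁, hc₁, hz₁, rfl⟩ ⟨c₂, z₂, hc₂, hz₂, rfl⟩
        obtain ⟨c₃, z₃, hc₃, hz₃, heq⟩ := table c₁ hc₁ c₂ hc₂
        refine ⟨c₃, z₃ * (z₁ * z₂), hc₃, mul_mem hz₃ (mul_mem hz₁ hz₂), ?_⟩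
        have hcomm : z₁ * c₂ = c₂ * z₁ := (Subgroup.mem_center_iff.mp hz₁ c₂).symm
        calc c₁ * z₁ * (c₂ * z₂) = c₁ * (z₁ * c₂) * z₂ := by simp [mul_assoc]
        _ = c₁ * (c₂ * z₁) * z₂ := by rw [hcomm]
        _ = (c₁ * c₂) * (z₁ * z₂) := by simp [mul_assoc]
        _ = (c₃ * z₃) * (z₁ * z₂) := by rw [heq]
        _ = c₃ * (z₃ * (z₁ * z₂)) := by simp [mul_assoc]
      inv_mem' := by
        rintro x ⟨c, z, hc, hz, rfl⟩
        have key : ∃ z', z' ∈ Z ∧ c⁻¹ = c * z' := by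
          rcases hc with e | e | e | e <;> rw [e]
          · exact ⟨1, one_mem _, by simp⟩
          · exact ⟨(a ^ 2)⁻¹, inv_mem ha2, by simp [pow_two, mul_assoc]⟩
          · exact ⟨(b ^ 2)⁻¹, inv_mem hb2, by simp [pow_two, mul_assoc]⟩
          · exact ⟨((a * b) ^ 2)⁻¹, inv_mem hab2, by simp [pow_two, mul_assoc, mul_inv_rev]⟩
        obtain ⟨z', hz', hce⟩ := key
        refine ⟨c, z' * z⁻¹, hc, mul_mem hz' (inv_mem hz), ?_⟩
        have hcomm : z⁻¹ * c⁻¹ = c⁻¹ * z⁻¹ :=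
          (Subgroup.mem_center_iff.mp (inv_mem hz) c⁻¹).symm
        calc (c * z)⁻¹ = z⁻¹ * c⁻¹ := by simp [mul_inv_rev]
        _ = c⁻¹ * z⁻¹ := hcomm
        _ = (c * z') * z⁻¹ := by rw [← hce]
        _ = c * (z' * z⁻¹) := by simp [mul_assoc] }
  have hS : ∀ g : G, g ∈ S := by
    have hle : Subgroup.closure ({a, b} : Set G) ≤ S := by
      rw [Subgroup.closure_le]
      rintro x hx
      rcases hx with e | e
      · rw [e]; exact ⟨a, 1, hma, one_mem _, by simp⟩
      · rw [e]; exact ⟨b, 1, hmb, one_mem _, by simp⟩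
    intro g
    exact hle (by rw [hgen]; trivial)
  have part1 : ∀ g : G, ∃ c z : G, c ∈ ({1, a, b, a * b} : Set G) ∧
      z ∈ Subgroup.center G ∧ g = c * z := fun g => hS g
  refine ⟨part1, ?_⟩
  -- every square is central
  have hsq : ∀ x : G, x ^ 2 ∈ Z := by
    intro x
    obtain ⟨c, z, hc, hz, rfl⟩ := part1 x
    have hcomm : z * c = c * z := (Subgroup.mem_center_iff.mp hz c).symm
    have hx2 : (c * z) ^ 2 = c ^ 2 * z ^ 2 := by
      calc (c * z) ^ 2 = c * (z * c) * z := by simp [pow_two, mul_assoc]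
      _ = c * (c * z) * z := by rw [hcomm]
      _ = c ^ 2 * z ^ 2 := by simp [pow_two, mul_assoc]
    rw [hx2]
    have hc2 : c ^ 2 ∈ Z := by
      rcases hc with e | e | e | e <;> rw [e]
      · simpa using one_mem Z
      · exact ha2
      · exact hb2
      · exact hab2
    exact mul_mem hc2 (pow_mem hz 2)
  intro x y
  have hc := Subgroup.mem_center_iff.mp (hsq (y * x)) x
  calc (x * y) ^ 2 = x * (y * x) ^ 2 * x⁻¹ := by simp [pow_two, mul_assoc]
  _ = (y * x) ^ 2 * x * x⁻¹ := by rw [hc]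
  _ = (y * x) ^ 2 := by simp [pow_two, mul_assoc]
end

section
/- Let G be a group generated by two elements a and b (i.e. Subgroup.closure {a, b} = ⊤). Then G is square commutative if and only if (a*b)^2 = (b*a)^2, a^2*b = b*a^2, and b^2*a = a*b^2. -/
lemma aux_mem_center {G : Type*} [Group G] {s : Set G} (hs : Subgroup.closure s = ⊤)
    {x : G} (h : ∀ y ∈ s, Commute y x) : x ∈ Subgroup.center G := by
  rw [Subgroup.mem_center_iff]
  intro g
  have hg : g ∈ Subgroup.closure s := by rw [hs]; trivial
  induction hg using Subgroup.closure_induction with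
  | mem y hy => exact h y hy
  | one => simp
  | mul p q hp hq ihp ihq => rw [mul_assoc, ihq, ← mul_assoc, ihp, mul_assoc]
  | inv p hp ih => exact (Commute.inv_left ih : _)

theorem stmt_3 {G : Type*} [Group G] (a b : G)
    (hgen : Subgroup.closure ({a, b} : Set G) = ⊤) :
    (∀ x y : G, (x * y) ^ 2 = (y * x) ^ 2) ↔
      ((a * b) ^ 2 = (b * a) ^ 2 ∧ a ^ 2 * b = b * a ^ 2 ∧ b ^ 2 * a = a * b ^ 2) := by
  constructor
  · intro h
    have key : ∀ x g : G, x * g ^ 2 = g ^ 2 * x := by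
      intro x g
      have h1 := h x (x⁻¹ * g)
      rw [show x * (x⁻¹ * g) = g by group] at h1
      conv_lhs => rw [h1]
      simp [pow_two, mul_assoc]
    exact ⟨h a b, (key b a).symm, (key a b).symm⟩
  · rintro ⟨h1, h2, h3⟩
    have ca2 : Commute a (a ^ 2) := (Commute.refl a).pow_right 2
    have cb2 : Commute b (b ^ 2) := (Commute.refl b).pow_right 2
    have cab_a : Commute a ((a * b) ^ 2) := by
      show a * (a * b) ^ 2 = (a * b) ^ 2 * a
      conv_lhs => rw [h1]
      simp [pow_two, mul_assoc]
    have cab_b : Commute b ((a * b) ^ 2) := by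
      show b * (a * b) ^ 2 = (a * b) ^ 2 * b
      conv_rhs => rw [h1]
      simp [pow_two, mul_assoc]
    have haZ : a ^ 2 ∈ Subgroup.center G := by
      apply aux_mem_center hgen
      intro y hy
      simp only [Set.mem_insert_iff, Set.mem_singleton_iff] at hy
      rcases hy with h | h
      · rw [h]; exact ca2
      · rw [h]; exact h2.symm
    have hbZ : b ^ 2 ∈ Subgroup.center G := by
      apply aux_mem_center hgen
      intro y hy
      simp only [Set.mem_insert_iff, Set.mem_singleton_iff] at hy
      rcases hy with h | h
      · rw [h]; exact h3.symm
      · rw [h]; exact cb2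
    have habZ : (a * b) ^ 2 ∈ Subgroup.center G := by
      apply aux_mem_center hgen
      intro y hy
      simp only [Set.mem_insert_iff, Set.mem_singleton_iff] at hy
      rcases hy with h | h
      · rw [h]; exact cab_a
      · rw [h]; exact cab_b
    set Z := Subgroup.center G with hZdef
    let π := QuotientGroup.mk' Z
    have hsurj : Function.Surjective π := QuotientGroup.mk'_surjective Z
    have hgenQ : Subgroup.closure ({π a, π b} : Set (G ⧸ Z)) = ⊤ := by
      rw [show ({π a, π b} : Set (G ⧸ Z)) = π '' {a, b} by rw [Set.image_pair],
        ← MonoidHom.map_closure, hgen, ← MonoidHom.range_eq_map]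
      exact MonoidHom.range_eq_top_of_surjective π hsurj
    have ha1 : (π a) ^ 2 = 1 := by
      rw [← map_pow]
      exact (QuotientGroup.eq_one_iff _).mpr haZ
    have hb1 : (π b) ^ 2 = 1 := by
      rw [← map_pow]
      exact (QuotientGroup.eq_one_iff _).mpr hbZ
    have hab1 : (π a * π b) ^ 2 = 1 := by
      rw [← map_mul, ← map_pow]
      exact (QuotientGroup.eq_one_iff _).mpr habZ
    have selfinv : ∀ x : G ⧸ Z, x ^ 2 = 1 → x⁻¹ = x := by
      intro x hx
      rw [← mul_one x⁻¹, ← hx]; group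
    have hcomm : π a * π b = π b * π a := by
      calc π a * π b = (π a * π b)⁻¹ := (selfinv _ hab1).symm
        _ = (π b)⁻¹ * (π a)⁻¹ := mul_inv_rev _ _
        _ = π b * π a := by rw [selfinv _ ha1, selfinv _ hb1]
    have hcen : ∀ q r : G ⧸ Z, q * r = r * q := by
      have hac : π a ∈ Subgroup.center (G ⧸ Z) := by
        apply aux_mem_center hgenQ
        intro y hy
        simp only [Set.mem_insert_iff, Set.mem_singleton_iff] at hy
        rcases hy with h | h
        · rw [h]
        · rw [h]; exact hcomm.symm
      have hbc : π b ∈ Subgroup.center (G ⧸ Z) := by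
        apply aux_mem_center hgenQ
        intro y hy
        simp only [Set.mem_insert_iff, Set.mem_singleton_iff] at hy
        rcases hy with h | h
        · rw [h]; exact hcomm
        · rw [h]
      have htop : Subgroup.center (G ⧸ Z) = ⊤ := by
        rw [eq_top_iff, ← hgenQ, Subgroup.closure_le]
        rintro y hy
        simp only [Set.mem_insert_iff, Set.mem_singleton_iff] at hy
        rcases hy with h | h
        · rw [h]; exact hac
        · rw [h]; exact hbc
      intro q r
      exact (Subgroup.mem_center_iff.mp (htop ▸ Subgroup.mem_top q) r).symm
    have hsq1 : ∀ q : G ⧸ Z, q ^ 2 = 1 := by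
      intro q
      have hq : q ∈ Subgroup.closure ({π a, π b} : Set (G ⧸ Z)) := by rw [hgenQ]; trivial
      induction hq using Subgroup.closure_induction with
      | mem y hy =>
        simp only [Set.mem_insert_iff, Set.mem_singleton_iff] at hy
        rcases hy with h | h
        · rw [h]; exact ha1
        · rw [h]; exact hb1
      | one => simp
      | mul p q hp hq ihp ihq =>
        rw [(show Commute p q from hcen p q).mul_pow, ihp, ihq, one_mul]
      | inv p hp ih => rw [inv_pow, ih, inv_one]
    have hZall : ∀ g : G, g ^ 2 ∈ Z := by
      intro g
      have : π (g ^ 2) = 1 := by rw [map_pow]; exact hsq1 (π g)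
      exact (QuotientGroup.eq_one_iff _).mp this
    intro x y
    have hc := Subgroup.mem_center_iff.mp (hZall (y * x)) x
    have h5 : (x * y) ^ 2 * x = (y * x) ^ 2 * x := by rw [← hc]; simp [pow_two, mul_assoc]
    exact mul_right_cancel h5
end

section
/- Let G be a square commutative group generated by two elements a and b (i.e. Subgroup.closure {a, b} = ⊤). Then every x ∈ G can be written as x = a^h * b^k * ((a*b)^2)^λ for some integers h, k and some λ ∈ {0, 1}. -/
theorem stmt_4 {G : Type*} [Group G] (a b : G)
    (hgen : Subgroup.closure ({a, b} : Set G) = ⊤)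
    (hG : ∀ x y : G, (x * y) ^ 2 = (y * x) ^ 2) :
    ∀ x : G, ∃ (h k : ℤ) (l : ℕ), (l = 0 ∨ l = 1) ∧
      x = a ^ h * b ^ k * ((a * b) ^ 2) ^ l := by
  -- squares are central
  have hsc : ∀ x g : G, g * x ^ 2 = x ^ 2 * g := by
    intro x g
    have h2 : x ^ 2 = g⁻¹ * x ^ 2 * g :=
      calc x ^ 2 = (g * (g⁻¹ * x)) ^ 2 := by group
      _ = (g⁻¹ * x * g) ^ 2 := hG g (g⁻¹ * x)
      _ = g⁻¹ * x ^ 2 * g := by rw [pow_two, pow_two]; group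
    calc g * x ^ 2 = g * (g⁻¹ * x ^ 2 * g) := by rw [← h2]
      _ = x ^ 2 * g := by group
  set c : G := (a * b) ^ 2 with hcdef
  have hzcom : ∀ (x g : G) (m : ℤ), g * x ^ (2 * m) = x ^ (2 * m) * g := by
    intro x g m
    have h1 : Commute g (x ^ 2) := hsc x g
    have h2 : Commute g ((x ^ (2:ℕ)) ^ m) := h1.zpow_right m
    have h3 : x ^ (2 * m) = (x ^ (2:ℕ)) ^ m := by
      rw [← zpow_natCast x 2, ← zpow_mul]; norm_num
    rw [h3]; exact h2
  have hc : ∀ g : G, g * c = c * g := fun g => hsc (a * b) g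
  have hcinvc : ∀ g : G, g * c⁻¹ = c⁻¹ * g := by
    intro g
    calc g * c⁻¹ = c⁻¹ * (c * g) * c⁻¹ := by group
      _ = c⁻¹ * (g * c) * c⁻¹ := by rw [hc g]
      _ = c⁻¹ * g := by group
  -- b * a = a⁻¹ * b⁻¹ * c
  have hba : b * a = a⁻¹ * b⁻¹ * c := by
    have h1 : a * (b * a) * b = c := by rw [hcdef, pow_two]; group
    calc b * a = a⁻¹ * (a * (b * a) * b) * b⁻¹ := by group
      _ = a⁻¹ * c * b⁻¹ := by rw [h1]
      _ = a⁻¹ * (b⁻¹ * c) := by rw [mul_assoc, ← hc b⁻¹]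
      _ = a⁻¹ * b⁻¹ * c := by group
  -- c * c = a ^ 4 * b ^ 4
  have hc2 : c * c = a ^ (2 * (2:ℤ)) * b ^ (2 * (2:ℤ)) := by
    have e1 : c * c = (a * b * a) * (b ^ 2 * (a * b * a)) := by
      rw [hcdef]; nth_rewrite 2 [hG a b]
      rw [pow_two, pow_two, pow_two]; group
    have e2 : (a * b * a) * (b ^ 2 * (a * b * a)) = ((a * b) * a) ^ 2 * b ^ 2 := by
      rw [← hsc b (a * b * a), pow_two, pow_two]; group
    have e3 : ((a * b) * a) ^ 2 * b ^ 2 = a ^ 2 * (b * a ^ 2) * (b * b ^ 2) := by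
      rw [hG (a * b) a, pow_two, pow_two, pow_two]; group
    have e4 : a ^ 2 * (b * a ^ 2) * (b * b ^ 2) = a ^ (2 * (2:ℤ)) * b ^ (2 * (2:ℤ)) := by
      rw [hsc a b]; group
    rw [e1, e2, e3, e4]
  -- swap lemma
  have hswap : ∀ h k : ℤ, b ^ k * a ^ h = a ^ h * b ^ k ∨
      b ^ k * a ^ h = a ^ (h - 2) * b ^ (k - 2) * c := by
    intro h k
    rcases Int.even_or_odd h with ⟨m, hm⟩ | ⟨m, hm⟩
    · left
      subst hm
      have h4 : (m + m : ℤ) = 2 * m := by ring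
      rw [h4]
      exact hzcom a (b ^ k) m
    · rcases Int.even_or_odd k with ⟨n, hn⟩ | ⟨n, hn⟩
      · left
        subst hn
        have h4 : (n + n : ℤ) = 2 * n := by ring
        rw [h4]
        exact (hzcom b (a ^ h) n).symm
      · right
        subst hm hn
        calc b ^ (2 * n + 1) * a ^ (2 * m + 1)
            = b ^ (2 * n) * ((b * a) * a ^ (2 * m)) := by group
          _ = b ^ (2 * n) * (a ^ (2 * m) * (b * a)) := by rw [hzcom a (b * a) m]
          _ = (b ^ (2 * n) * a ^ (2 * m)) * (b * a) := by group
          _ = (a ^ (2 * m) * b ^ (2 * n)) * (b * a) := by rw [hzcom a (b ^ (2 * n)) m]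
          _ = (a ^ (2 * m) * b ^ (2 * n)) * (a⁻¹ * b⁻¹ * c) := by rw [hba]
          _ = a ^ (2 * m) * (b ^ (2 * n) * a⁻¹) * b⁻¹ * c := by group
          _ = a ^ (2 * m) * (a⁻¹ * b ^ (2 * n)) * b⁻¹ * c := by
              rw [show b ^ (2 * n) * a⁻¹ = a⁻¹ * b ^ (2 * n) from
                (hzcom b a⁻¹ n).symm]
          _ = a ^ (2 * m + 1 - 2) * b ^ (2 * n + 1 - 2) * c := by group
  -- c * c appended to a normal form
  have hcc : ∀ H K : ℤ, a ^ H * b ^ K * (c * c) =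
      a ^ (H + 2 * 2) * b ^ (K + 2 * 2) := by
    intro H K
    calc a ^ H * b ^ K * (c * c)
        = a ^ H * ((b ^ K * a ^ (2 * (2:ℤ))) * b ^ (2 * (2:ℤ))) := by rw [hc2]; group
      _ = a ^ H * ((a ^ (2 * (2:ℤ)) * b ^ K) * b ^ (2 * (2:ℤ))) := by
          rw [hzcom a (b ^ K) 2]
      _ = a ^ (H + 2 * 2) * b ^ (K + 2 * 2) := by group
  -- c⁻¹ in normal form
  have hcinv : c⁻¹ = a ^ (2 * (-2:ℤ)) * b ^ (2 * (-2:ℤ)) * c := by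
    have h1 : c * (a ^ (2 * (-2:ℤ)) * b ^ (2 * (-2:ℤ)) * c) = 1 := by
      calc c * (a ^ (2 * (-2:ℤ)) * b ^ (2 * (-2:ℤ)) * c)
          = (c * (a ^ (2 * (-2:ℤ)) * b ^ (2 * (-2:ℤ)))) * c := by group
        _ = ((a ^ (2 * (-2:ℤ)) * b ^ (2 * (-2:ℤ))) * c) * c := by
            rw [← hc (a ^ (2 * (-2:ℤ)) * b ^ (2 * (-2:ℤ)))]
        _ = a ^ (2 * (-2:ℤ)) * b ^ (2 * (-2:ℤ)) * (c * c) := by group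
        _ = a ^ (2 * (-2:ℤ)) * ((b ^ (2 * (-2:ℤ)) * a ^ (2 * (2:ℤ))) * b ^ (2 * (2:ℤ))) := by
            rw [hc2]; group
        _ = a ^ (2 * (-2:ℤ)) * ((a ^ (2 * (2:ℤ)) * b ^ (2 * (-2:ℤ))) * b ^ (2 * (2:ℤ))) := by
            rw [hzcom a (b ^ (2 * (-2:ℤ))) 2]
        _ = 1 := by group
    exact inv_eq_of_mul_eq_one_right h1
  -- product of two normal forms without c
  have hmul0 : ∀ h k h' k' : ℤ, ∃ H K : ℤ,
      (a ^ h * b ^ k) * (a ^ h' * b ^ k') = a ^ H * b ^ K ∨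
      (a ^ h * b ^ k) * (a ^ h' * b ^ k') = a ^ H * b ^ K * c := by
    intro h k h' k'
    rcases hswap h' k with hs | hs
    · refine ⟨h + h', k + k', Or.inl ?_⟩
      calc (a ^ h * b ^ k) * (a ^ h' * b ^ k')
          = a ^ h * ((b ^ k * a ^ h') * b ^ k') := by group
        _ = a ^ h * ((a ^ h' * b ^ k) * b ^ k') := by rw [hs]
        _ = a ^ (h + h') * b ^ (k + k') := by group
    · refine ⟨h + (h' - 2), k - 2 + k', Or.inr ?_⟩
      calc (a ^ h * b ^ k) * (a ^ h' * b ^ k')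
          = a ^ h * ((b ^ k * a ^ h') * b ^ k') := by group
        _ = a ^ h * ((a ^ (h' - 2) * b ^ (k - 2) * c) * b ^ k') := by rw [hs]
        _ = a ^ h * (a ^ (h' - 2) * b ^ (k - 2) * (c * b ^ k')) := by group
        _ = a ^ h * (a ^ (h' - 2) * b ^ (k - 2) * (b ^ k' * c)) := by
            rw [← hc (b ^ k')]
        _ = a ^ (h + (h' - 2)) * b ^ (k - 2 + k') * c := by group
  -- the invariant
  have key : ∀ x : G, x ∈ Subgroup.closure ({a, b} : Set G) →
      ∃ h k : ℤ, x = a ^ h * b ^ k ∨ x = a ^ h * b ^ k * c := by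
    intro x hx
    induction hx using Subgroup.closure_induction with
    | mem x hx =>
      rcases hx with rfl | rfl
      · exact ⟨1, 0, Or.inl (by group)⟩
      · exact ⟨0, 1, Or.inl (by group)⟩
    | one => exact ⟨0, 0, Or.inl (by group)⟩
    | mul x y hxm hym px py =>
      obtain ⟨h, k, hx⟩ := px
      obtain ⟨h', k', hy⟩ := py
      obtain ⟨H, K, hm⟩ := hmul0 h k h' k'
      rcases hx with rfl | rfl <;> rcases hy with rfl | rfl <;> rcases hm with hm | hm
      · exact ⟨H, K, Or.inl hm⟩
      · exact ⟨H, K, Or.inr hm⟩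
      · refine ⟨H, K, Or.inr ?_⟩
        calc (a ^ h * b ^ k) * (a ^ h' * b ^ k' * c)
            = ((a ^ h * b ^ k) * (a ^ h' * b ^ k')) * c := by group
          _ = a ^ H * b ^ K * c := by rw [hm]
      · refine ⟨H + 2 * 2, K + 2 * 2, Or.inl ?_⟩
        calc (a ^ h * b ^ k) * (a ^ h' * b ^ k' * c)
            = ((a ^ h * b ^ k) * (a ^ h' * b ^ k')) * c := by group
          _ = (a ^ H * b ^ K * c) * c := by rw [hm]
          _ = a ^ H * b ^ K * (c * c) := by group
          _ = a ^ (H + 2 * 2) * b ^ (K + 2 * 2) := hcc H K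
      · refine ⟨H, K, Or.inr ?_⟩
        calc (a ^ h * b ^ k * c) * (a ^ h' * b ^ k')
            = (a ^ h * b ^ k) * (c * (a ^ h' * b ^ k')) := by group
          _ = (a ^ h * b ^ k) * ((a ^ h' * b ^ k') * c) := by rw [← hc (a ^ h' * b ^ k')]
          _ = ((a ^ h * b ^ k) * (a ^ h' * b ^ k')) * c := by group
          _ = a ^ H * b ^ K * c := by rw [hm]
      · refine ⟨H + 2 * 2, K + 2 * 2, Or.inl ?_⟩
        calc (a ^ h * b ^ k * c) * (a ^ h' * b ^ k')
            = (a ^ h * b ^ k) * (c * (a ^ h' * b ^ k')) := by group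
          _ = (a ^ h * b ^ k) * ((a ^ h' * b ^ k') * c) := by rw [← hc (a ^ h' * b ^ k')]
          _ = ((a ^ h * b ^ k) * (a ^ h' * b ^ k')) * c := by group
          _ = (a ^ H * b ^ K * c) * c := by rw [hm]
          _ = a ^ H * b ^ K * (c * c) := by group
          _ = a ^ (H + 2 * 2) * b ^ (K + 2 * 2) := hcc H K
      · refine ⟨H + 2 * 2, K + 2 * 2, Or.inl ?_⟩
        calc (a ^ h * b ^ k * c) * (a ^ h' * b ^ k' * c)
            = (a ^ h * b ^ k) * (c * (a ^ h' * b ^ k')) * c := by group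
          _ = (a ^ h * b ^ k) * ((a ^ h' * b ^ k') * c) * c := by
              rw [← hc (a ^ h' * b ^ k')]
          _ = ((a ^ h * b ^ k) * (a ^ h' * b ^ k')) * (c * c) := by group
          _ = (a ^ H * b ^ K) * (c * c) := by rw [hm]
          _ = a ^ (H + 2 * 2) * b ^ (K + 2 * 2) := hcc H K
      · refine ⟨H + 2 * 2, K + 2 * 2, Or.inr ?_⟩
        calc (a ^ h * b ^ k * c) * (a ^ h' * b ^ k' * c)
            = (a ^ h * b ^ k) * (c * (a ^ h' * b ^ k')) * c := by group
          _ = (a ^ h * b ^ k) * ((a ^ h' * b ^ k') * c) * c := by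
              rw [← hc (a ^ h' * b ^ k')]
          _ = ((a ^ h * b ^ k) * (a ^ h' * b ^ k')) * (c * c) := by group
          _ = (a ^ H * b ^ K * c) * (c * c) := by rw [hm]
          _ = (a ^ H * b ^ K * (c * c)) * c := by group
          _ = a ^ (H + 2 * 2) * b ^ (K + 2 * 2) * c := by rw [hcc H K]
    | inv x hxm px =>
      obtain ⟨h, k, hx⟩ := px
      rcases hx with rfl | rfl
      · rcases hswap (-h) (-k) with hs | hs
        · refine ⟨-h, -k, Or.inl ?_⟩
          calc (a ^ h * b ^ k)⁻¹ = b ^ (-k) * a ^ (-h) := by group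
            _ = a ^ (-h) * b ^ (-k) := hs
        · refine ⟨-h - 2, -k - 2, Or.inr ?_⟩
          calc (a ^ h * b ^ k)⁻¹ = b ^ (-k) * a ^ (-h) := by group
            _ = a ^ (-h - 2) * b ^ (-k - 2) * c := hs
      · rcases hswap (-h) (-k) with hs | hs
        · refine ⟨-h + 2 * (-2), -k + 2 * (-2), Or.inr ?_⟩
          calc (a ^ h * b ^ k * c)⁻¹
              = (b ^ (-k) * a ^ (-h)) * c⁻¹ := by rw [hcinvc]; group
            _ = (a ^ (-h) * b ^ (-k)) * c⁻¹ := by rw [hs]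
            _ = (a ^ (-h) * b ^ (-k)) * (a ^ (2 * (-2:ℤ)) * b ^ (2 * (-2:ℤ)) * c) := by
                rw [hcinv]
            _ = a ^ (-h) * ((b ^ (-k) * a ^ (2 * (-2:ℤ))) * (b ^ (2 * (-2:ℤ)) * c)) := by
                group
            _ = a ^ (-h) * ((a ^ (2 * (-2:ℤ)) * b ^ (-k)) * (b ^ (2 * (-2:ℤ)) * c)) := by
                rw [hzcom a (b ^ (-k)) (-2)]
            _ = a ^ (-h + 2 * (-2)) * b ^ (-k + 2 * (-2)) * c := by group
        · refine ⟨-h - 2, -k - 2, Or.inl ?_⟩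
          calc (a ^ h * b ^ k * c)⁻¹
              = (b ^ (-k) * a ^ (-h)) * c⁻¹ := by rw [hcinvc]; group
            _ = (a ^ (-h - 2) * b ^ (-k - 2) * c) * c⁻¹ := by rw [hs]
            _ = a ^ (-h - 2) * b ^ (-k - 2) := by group
  -- conclusion
  intro x
  obtain ⟨h, k, hx⟩ := key x (by rw [hgen]; exact Subgroup.mem_top x)
  rcases hx with hx | hx
  · exact ⟨h, k, 0, Or.inl rfl, by rw [pow_zero, mul_one]; exact hx⟩
  · exact ⟨h, k, 1, Or.inr rfl, by rw [pow_one]; exact hx⟩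
end

section
/- Let G be a group generated by two elements a and b (i.e. Subgroup.closure {a, b} = ⊤), and suppose a^n = 1 for some odd natural number n ≥ 1. Then G is square commutative if and only if G is commutative (i.e. x*y = y*x for all x, y ∈ G). -/
theorem stmt_5 {G : Type*} [Group G] (a b : G)
    (hgen : Subgroup.closure ({a, b} : Set G) = ⊤)
    (n : ℕ) (hn1 : 1 ≤ n) (hodd : Odd n) (ha : a ^ n = 1) :
    (∀ x y : G, (x * y) ^ 2 = (y * x) ^ 2) ↔ (∀ x y : G, x * y = y * x) := by
  constructor
  · intro h
    -- squares are central
    have hsq : ∀ z w : G, Commute (z ^ 2) w := by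
      intro z w
      have h2 : z ^ 2 = w⁻¹ * z ^ 2 * w := by
        calc z ^ 2 = (w * (w⁻¹ * z)) ^ 2 := by rw [mul_inv_cancel_left]
        _ = ((w⁻¹ * z) * w) ^ 2 := h w (w⁻¹ * z)
        _ = w⁻¹ * z ^ 2 * w := by simp [pow_two, mul_assoc]
      have h3 : w * z ^ 2 = z ^ 2 * w := by
        conv_lhs => rw [h2]
        group
      exact h3.symm
    -- a is central
    obtain ⟨k, hk⟩ := hodd
    have hainv : (a ^ k) ^ 2 = a⁻¹ := by
      have h1 : (a ^ k) ^ 2 * a = 1 := by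
        rw [← pow_mul, ← pow_succ]
        rw [hk] at ha
        convert ha using 2
        omega
      rw [eq_inv_iff_mul_eq_one]
      exact h1
    have hacen : ∀ x : G, Commute a x := by
      intro x
      have h1 := (hsq (a ^ k) x).inv_left
      rwa [hainv, inv_inv] at h1
    -- b commutes with everything
    have hbcen : ∀ x : G, Commute b x := by
      intro x
      have hle : Subgroup.closure ({a, b} : Set G) ≤ Subgroup.centralizer {b} := by
        rw [Subgroup.closure_le]
        intro g hg
        rw [SetLike.mem_coe, Subgroup.mem_centralizer_iff]
        intro m hm
        rw [Set.mem_singleton_iff] at hm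
        subst hm
        simp only [Set.mem_insert_iff, Set.mem_singleton_iff] at hg
        rcases hg with rfl | rfl
        · exact (hacen m).symm
        · rfl
      have hx : x ∈ Subgroup.centralizer {b} := hle (hgen ▸ Subgroup.mem_top x)
      exact Subgroup.mem_centralizer_iff.mp hx b rfl
    -- every element is central
    intro x y
    have hle : Subgroup.closure ({a, b} : Set G) ≤ Subgroup.centralizer {x} := by
      rw [Subgroup.closure_le]
      intro g hg
      rw [SetLike.mem_coe, Subgroup.mem_centralizer_iff]
      intro m hm
      rw [Set.mem_singleton_iff] at hm
      subst hm
      simp only [Set.mem_insert_iff, Set.mem_singleton_iff] at hg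
      rcases hg with rfl | rfl
      · exact (hacen m).symm
      · exact (hbcen m).symm
    have hy : y ∈ Subgroup.centralizer {x} := hle (hgen ▸ Subgroup.mem_top y)
    exact Subgroup.mem_centralizer_iff.mp hy x rfl
  · intro h x y
    rw [h]
end

section
/- Let G be a square commutative group, and let l₁ and l₂ be lists of elements of G such that l₂ is a permutation of l₁ (List.Perm l₁ l₂). Then there exists d in the center of G with d^2 = 1 such that the product of l₂ equals the product of l₁ multiplied by d. -/
theorem stmt_7 {G : Type*} [Group G]
    (hG : ∀ x y : G, (x * y) ^ 2 = (y * x) ^ 2)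
    (l₁ l₂ : List G) (hperm : List.Perm l₁ l₂) :
    ∃ d : G, d ∈ Subgroup.center G ∧ d ^ 2 = 1 ∧ l₂.prod = l₁.prod * d := by
  -- squares are central
  have hc : ∀ a b : G, a ^ 2 * b = b * a ^ 2 := by
    intro a b
    have h := hG b (a * b⁻¹)
    simp only [sq, mul_assoc, inv_mul_cancel_left, mul_inv_cancel_left, inv_mul_cancel,
      mul_one] at h
    -- h : b * (a * (a * b⁻¹)) = a * a
    rw [sq]
    calc a * a * b = b * (a * (a * b⁻¹)) * b := by rw [h]
      _ = b * (a * a) := by simp [mul_assoc]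
  have hsqmem : ∀ a : G, a ^ 2 ∈ Subgroup.center G :=
    fun a => Subgroup.mem_center_iff.mpr fun g => (hc a g).symm
  have hxy : ∀ x y : G, (x * y) * (y * x) = x ^ 2 * y ^ 2 := by
    intro x y
    calc (x * y) * (y * x) = x * (y ^ 2 * x) := by simp [sq, mul_assoc]
      _ = x * (x * y ^ 2) := by rw [hc y x]
      _ = x ^ 2 * y ^ 2 := by simp [sq, mul_assoc]
  have hd : ∀ x y : G, (x * y)⁻¹ * (y * x) = ((x * y) ^ 2)⁻¹ * (x ^ 2 * y ^ 2) := by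
    intro x y
    rw [← hxy]
    simp [sq, mul_assoc]
  have hdmem : ∀ x y : G, (x * y)⁻¹ * (y * x) ∈ Subgroup.center G := by
    intro x y
    rw [hd]
    exact mul_mem (inv_mem (hsqmem _)) (mul_mem (hsqmem x) (hsqmem y))
  have hdsq : ∀ x y : G, ((x * y)⁻¹ * (y * x)) ^ 2 = 1 := by
    intro x y
    have hcomm := Subgroup.mem_center_iff.mp (hdmem x y) (x * y)
    have hd' : (y * x) * (x * y)⁻¹ = (x * y)⁻¹ * (y * x) := by
      calc (y * x) * (x * y)⁻¹ = (x * y) * ((x * y)⁻¹ * (y * x)) * (x * y)⁻¹ := by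
            simp [mul_assoc]
        _ = ((x * y)⁻¹ * (y * x)) * (x * y) * (x * y)⁻¹ := by rw [hcomm]
        _ = (x * y)⁻¹ * (y * x) := by simp [mul_assoc]
    rw [sq]
    nth_rewrite 2 [← hd']
    calc ((x * y)⁻¹ * (y * x)) * ((y * x) * (x * y)⁻¹)
        = (x * y)⁻¹ * ((y * x) ^ 2 * (x * y)⁻¹) := by simp [sq, mul_assoc]
      _ = (x * y)⁻¹ * ((x * y) ^ 2 * (x * y)⁻¹) := by rw [hG y x]
      _ = 1 := by simp [sq, mul_assoc]
  induction hperm with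
  | nil => exact ⟨1, Subgroup.one_mem _, one_pow 2, by simp⟩
  | cons x h ih =>
      obtain ⟨d, hd1, hd2, hd3⟩ := ih
      exact ⟨d, hd1, hd2, by simp [List.prod_cons, hd3, mul_assoc]⟩
  | swap x y l =>
      refine ⟨(y * x)⁻¹ * (x * y), hdmem y x, hdsq y x, ?_⟩
      have hc' := Subgroup.mem_center_iff.mp (hdmem y x) l.prod
      rw [List.prod_cons, List.prod_cons, List.prod_cons, List.prod_cons,
        mul_assoc, mul_assoc, hc']
      simp [mul_assoc]
  | trans h1 h2 ih1 ih2 =>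
      obtain ⟨d, hd1, hd2, hd3⟩ := ih1
      obtain ⟨e, he1, he2, he3⟩ := ih2
      have hde : Commute d e := Subgroup.mem_center_iff.mp he1 d
      refine ⟨d * e, mul_mem hd1 he1, ?_, by rw [he3, hd3, mul_assoc]⟩
      rw [hde.mul_pow, hd2, he2, one_mul]
end

section
/- Let G be a group generated by a finite set T of pairwise distinct elements a₁, …, aₙ with n ≥ 3 (i.e. Subgroup.closure T = ⊤ and T has cardinality n ≥ 3). Then G is square commutative if and only if for all pairwise distinct x₁, x₂, x₃ ∈ T one has x₁*x₂^2 = x₂^2*x₁, x₁*(x₂*x₃)^2 = (x₂*x₃)^2*x₁, and (x₁*x₂)^2 = (x₂*x₁)^2. -/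
theorem stmt_8 {G : Type*} [Group G] (n : ℕ) (hn : 3 ≤ n) (T : Finset G)
    (hcard : T.card = n) (hgen : Subgroup.closure (T : Set G) = ⊤) :
    (∀ x y : G, (x * y) ^ 2 = (y * x) ^ 2) ↔
      (∀ x₁ ∈ T, ∀ x₂ ∈ T, ∀ x₃ ∈ T, x₁ ≠ x₂ → x₁ ≠ x₃ → x₂ ≠ x₃ →
        x₁ * x₂ ^ 2 = x₂ ^ 2 * x₁ ∧
        x₁ * (x₂ * x₃) ^ 2 = (x₂ * x₃) ^ 2 * x₁ ∧
        (x₁ * x₂) ^ 2 = (x₂ * x₁) ^ 2) := by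
  constructor
  · intro h x₁ _ x₂ _ x₃ _ _ _ _
    have hsq : ∀ a b : G, a * b ^ 2 = b ^ 2 * a := by
      intro a b
      have key := h a (a⁻¹ * b)
      have e1 : (a * (a⁻¹ * b)) ^ 2 = b ^ 2 := by rw [pow_two, pow_two]; group
      have e2 : ((a⁻¹ * b) * a) ^ 2 = a⁻¹ * b ^ 2 * a := by rw [pow_two, pow_two]; group
      rw [e1, e2] at key
      conv_lhs => rw [key]
      group
    exact ⟨hsq _ _, hsq _ _, h _ _⟩
  · intro hT
    classical
    -- pick a third element
    have third : ∀ s ∈ T, ∀ t ∈ T, s ≠ t → ∃ u ∈ T, u ≠ s ∧ u ≠ t := by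
      intro s hs t ht hst
      have h2 : ({s, t} : Finset G).card ≤ 2 := by
        apply le_trans (Finset.card_insert_le _ _)
        simp
      have hle : T.card ≤ (T \ {s, t}).card + ({s, t} : Finset G).card :=
        Finset.card_le_card_sdiff_add_card
      have : (T \ {s, t}).Nonempty := by
        rw [← Finset.card_pos]
        omega
      obtain ⟨u, hu⟩ := this
      rw [Finset.mem_sdiff, Finset.mem_insert, Finset.mem_singleton] at hu
      exact ⟨u, hu.1, fun h => hu.2 (Or.inl h), fun h => hu.2 (Or.inr h)⟩
    have comm1 : ∀ s ∈ T, ∀ t ∈ T, s * t ^ 2 = t ^ 2 * s := by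
      intro s hs t ht
      by_cases hst : s = t
      · subst hst; group
      · obtain ⟨u, hu, hus, hut⟩ := third s hs t ht hst
        exact (hT s hs t ht u hu hst (Ne.symm hus) (Ne.symm hut)).1
    have comm3 : ∀ s ∈ T, ∀ t ∈ T, (s * t) ^ 2 = (t * s) ^ 2 := by
      intro s hs t ht
      by_cases hst : s = t
      · subst hst; rfl
      · obtain ⟨u, hu, hus, hut⟩ := third s hs t ht hst
        exact (hT s hs t ht u hu hst (Ne.symm hus) (Ne.symm hut)).2.2
    have comm2 : ∀ s ∈ T, ∀ t ∈ T, ∀ u ∈ T, u * (s * t) ^ 2 = (s * t) ^ 2 * u := by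
      intro s hs t ht u hu
      by_cases hst : s = t
      · subst hst
        have h1 := comm1 u hu s hs
        have e : (s * s) ^ 2 = s ^ 2 * s ^ 2 := by rw [pow_two, pow_two]
        rw [e, ← mul_assoc, h1, mul_assoc, h1, mul_assoc]
      · by_cases hus : u = s
        · subst hus
          have h3 := comm3 u hu t ht
          conv_lhs => rw [h3]
          rw [pow_two, pow_two]; group
        · by_cases hut : u = t
          · subst hut
            have h3 := comm3 s hs u hu
            conv_rhs => rw [h3]
            rw [pow_two, pow_two]; group
          · exact (hT u hu s hs t ht hus hut hst).2.1
    -- elements commuting with all generators are central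
    have toCenter : ∀ a : G, (∀ t ∈ T, Commute a t) → a ∈ Subgroup.center G := by
      intro a ha
      rw [Subgroup.mem_center_iff]
      intro g
      have hg : g ∈ Subgroup.closure (T : Set G) := by rw [hgen]; exact Subgroup.mem_top g
      have : Commute a g := by
        induction hg using Subgroup.closure_induction with
        | mem x hx => exact ha x hx
        | one => exact Commute.one_right a
        | mul x y _ _ hx hy => exact hx.mul_right hy
        | inv x _ hx => exact hx.inv_right
      exact this.symm
    have sqZ : ∀ t ∈ T, t ^ 2 ∈ Subgroup.center G := by
      intro t ht
      exact toCenter _ (fun s hs => (comm1 s hs t ht).symm)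
    have prodZ : ∀ s ∈ T, ∀ t ∈ T, (s * t) ^ 2 ∈ Subgroup.center G := by
      intro s hs t ht
      exact toCenter _ (fun u hu => (comm2 s hs t ht u hu).symm)
    -- work in the quotient by the center
    set Z := Subgroup.center G with hZ
    have hmk : ∀ g : G, g ^ 2 ∈ Z → ((g : G ⧸ Z)) ^ 2 = 1 := by
      intro g hg
      have : ((g ^ 2 : G) : G ⧸ Z) = 1 := (QuotientGroup.eq_one_iff _).mpr hg
      simpa using this
    have genP : ∀ s ∈ T, ∀ t ∈ T, Commute (s : G ⧸ Z) (t : G ⧸ Z) := by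
      intro s hs t ht
      have has : ((s : G ⧸ Z))⁻¹ = (s : G ⧸ Z) := by
        have := hmk s (sqZ s hs); rw [pow_two] at this
        exact inv_eq_of_mul_eq_one_right this
      have hat : ((t : G ⧸ Z))⁻¹ = (t : G ⧸ Z) := by
        have := hmk t (sqZ t ht); rw [pow_two] at this
        exact inv_eq_of_mul_eq_one_right this
      have habi : ((s : G ⧸ Z) * t)⁻¹ = (s : G ⧸ Z) * t := by
        have := hmk (s * t) (prodZ s hs t ht)
        rw [pow_two] at this
        have : (((s : G ⧸ Z) * t) * ((s : G ⧸ Z) * t)) = 1 := by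
          simpa using this
        exact inv_eq_of_mul_eq_one_right this
      unfold Commute SemiconjBy
      calc (s : G ⧸ Z) * t = ((s : G ⧸ Z) * t)⁻¹ := habi.symm
        _ = (t : G ⧸ Z)⁻¹ * (s : G ⧸ Z)⁻¹ := by rw [mul_inv_rev]
        _ = (t : G ⧸ Z) * s := by rw [has, hat]
    have hgenQ : Subgroup.closure ((QuotientGroup.mk' Z : G →* G ⧸ Z) '' (T : Set G)) = ⊤ := by
      rw [← MonoidHom.map_closure, hgen]
      exact Subgroup.map_top_of_surjective _ (QuotientGroup.mk'_surjective Z)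
    have commQ : ∀ a b : G ⧸ Z, Commute a b := by
      intro a b
      have ha : a ∈ Subgroup.closure ((QuotientGroup.mk' Z : G →* G ⧸ Z) '' (T : Set G)) := by
        rw [hgenQ]; exact Subgroup.mem_top a
      have hb : b ∈ Subgroup.closure ((QuotientGroup.mk' Z : G →* G ⧸ Z) '' (T : Set G)) := by
        rw [hgenQ]; exact Subgroup.mem_top b
      induction ha, hb using Subgroup.closure_induction₂ with
      | mem x y hx hy =>
        obtain ⟨s, hs, rfl⟩ := hx
        obtain ⟨t, ht, rfl⟩ := hy
        exact genP s hs t ht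
      | one_left x hx => exact Commute.one_left x
      | one_right x hx => exact Commute.one_right x
      | mul_left x y z _ _ _ h1 h2 => exact h1.mul_left h2
      | mul_right y z x _ _ _ h1 h2 => exact h1.mul_right h2
      | inv_left x y _ _ h => exact h.inv_left
      | inv_right x y _ _ h => exact h.inv_right
    have sqtriv : ∀ q : G ⧸ Z, q ^ 2 = 1 := by
      intro q
      have hq : q ∈ Subgroup.closure ((QuotientGroup.mk' Z : G →* G ⧸ Z) '' (T : Set G)) := by
        rw [hgenQ]; exact Subgroup.mem_top q
      induction hq using Subgroup.closure_induction with
      | mem x hx =>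
        obtain ⟨s, hs, rfl⟩ := hx
        exact hmk s (sqZ s hs)
      | one => simp
      | mul x y _ _ hx hy =>
        rw [(commQ x y).mul_pow, hx, hy, mul_one]
      | inv x _ hx => rw [inv_pow, hx, inv_one]
    have allsq : ∀ g : G, g ^ 2 ∈ Z := by
      intro g
      have : ((g ^ 2 : G) : G ⧸ Z) = 1 := by
        exact_mod_cast sqtriv (g : G ⧸ Z)
      exact (QuotientGroup.eq_one_iff _).mp this
    intro x y
    have h1 := (Subgroup.mem_center_iff.mp (allsq (y * x))) x
    calc (x * y) ^ 2 = x * (y * x) ^ 2 * x⁻¹ := by rw [pow_two, pow_two]; group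
      _ = (y * x) ^ 2 * x * x⁻¹ := by rw [h1]
      _ = (y * x) ^ 2 := by group
end

section
/- Let G be a square commutative group generated by elements a₁, …, aₙ (i.e. Subgroup.closure {a₁, …, aₙ} = ⊤). Then every x ∈ G can be written as x = a₁^{h₁} * a₂^{h₂} * ⋯ * aₙ^{hₙ} * ∏_{1 ≤ i < j ≤ n} ((a_i*a_j)^2)^{λ_{i,j}} for some integers h₁, …, hₙ and exponents λ_{i,j} ∈ {0, 1} (the factors ((a_i*a_j)^2)^{λ_{i,j}} are central, so the order of the product over pairs is immaterial). -/
section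
variable {G : Type*} [Group G]


lemma sc_hc (hG : ∀ x y : G, (x * y) ^ 2 = (y * x) ^ 2) (x g : G) :
    Commute x (g ^ 2) := by
  have h1 := hG x (x⁻¹ * g)
  have h2 : (x * (x⁻¹ * g)) = g := by group
  rw [h2] at h1
  have h3 : (x⁻¹ * g * x) = x⁻¹ * g * x⁻¹⁻¹ := by group
  rw [h3, conj_pow] at h1
  unfold Commute SemiconjBy
  nth_rewrite 1 [h1]
  group

def cmt (u v : G) : G := (u * v) ^ 2 * (u ^ 2)⁻¹ * (v ^ 2)⁻¹

lemma cmt_central (hG : ∀ x y : G, (x * y) ^ 2 = (y * x) ^ 2) (x u v : G) :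
    Commute x (cmt u v) :=
  ((sc_hc hG x (u*v)).mul_right (sc_hc hG x u).inv_right).mul_right (sc_hc hG x v).inv_right

lemma cube (hG : ∀ x y : G, (x * y) ^ 2 = (y * x) ^ 2) (u v : G) : (v * u) ^ 3 = u * v * (u ^ 2 * v ^ 2) := by
  have c1 : ∀ g x : G, g ^ 2 * x = x * g ^ 2 := fun g x => ((sc_hc hG x g).symm).eq
  calc (v*u)^3 = (v*u) * (u*v)^2 := by rw [pow_succ', hG]
  _ = v * u^2 * (v * (u * v)) := by simp [pow_two, mul_assoc]
  _ = u^2 * v * (v * (u * v)) := by rw [← c1 u v]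
  _ = u^2 * (v^2 * u) * v := by simp [pow_two, mul_assoc]
  _ = u^2 * (u * v^2) * v := by rw [c1 v u]
  _ = u * (u^2 * v) * v^2 := by group
  _ = u * (v * u^2) * v^2 := by rw [c1 u v]
  _ = u * v * (u^2 * v^2) := by group

lemma swap (hG : ∀ x y : G, (x * y) ^ 2 = (y * x) ^ 2) (u v : G) : u * v = v * u * cmt v u := by
  have e : v * u * cmt v u = (v*u)^3 * ((v^2)⁻¹ * (u^2)⁻¹) := by
    unfold cmt; group
  rw [e, cube hG u v]
  group

lemma pow4 (hG : ∀ x y : G, (x * y) ^ 2 = (y * x) ^ 2) (u v : G) : (u * v) ^ 4 = u ^ 4 * v ^ 4 := by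
  have c1 : ∀ g x : G, g ^ 2 * x = x * g ^ 2 := fun g x => ((sc_hc hG x g).symm).eq
  calc (u*v)^4 = (u*v) * (u*v)^3 := by rw [pow_succ']
  _ = (u*v) * (v * u * (v^2 * u^2)) := by rw [cube hG v u]
  _ = u * (v^2 * u) * (v^2 * u^2) := by simp [pow_two, mul_assoc]
  _ = u * (u * v^2) * (v^2 * u^2) := by rw [c1 v u]
  _ = u^2 * (v^4 * u^2) := by
        rw [show (v:G)^4 = v^2*v^2 by rw [← pow_add]]
        simp [pow_two, mul_assoc]
  _ = u^2 * (u^2 * v^4) := by rw [← c1 u (v^4)]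
  _ = u^4 * v^4 := by group

lemma szp (hG : ∀ x y : G, (x * y) ^ 2 = (y * x) ^ 2) (u v : G) (t : ℤ) : u ^ t * v = v * u ^ t * cmt v u ^ t := by
  have hconj : v⁻¹ * u * v = u * cmt v u := by
    have h := swap hG u v
    calc v⁻¹ * u * v = v⁻¹ * (u * v) := by group
    _ = v⁻¹ * (v * u * cmt v u) := by rw [← h]
    _ = u * cmt v u := by group
  have e : (v⁻¹ * u * v) ^ t = v⁻¹ * u ^ t * v := by
    rw [show v⁻¹ * u * v = v⁻¹ * u * v⁻¹⁻¹ by group, conj_zpow]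
    group
  calc u ^ t * v = v * (v⁻¹ * u ^ t * v) := by group
  _ = v * ((v⁻¹ * u * v) ^ t) := by rw [e]
  _ = v * ((u * cmt v u) ^ t) := by rw [hconj]
  _ = v * (u ^ t * cmt v u ^ t) := by rw [(cmt_central hG u v u).mul_zpow]
  _ = v * u ^ t * cmt v u ^ t := by group

lemma szp2 (hG : ∀ x y : G, (x * y) ^ 2 = (y * x) ^ 2) (u v : G) (s t : ℤ) :
    u ^ s * v ^ t = v ^ t * u ^ s * cmt u v ^ (-(s * t)) := by
  have h := szp hG v u t  -- v^t * u = u * v^t * cmt u v ^ t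
  have hconj : (v ^ t)⁻¹ * u * v ^ t = u * cmt u v ^ (-t) := by
    rw [zpow_neg]
    calc (v ^ t)⁻¹ * u * v ^ t = (v^t)⁻¹ * ((u * v ^ t * cmt u v ^ t) * (cmt u v ^ t)⁻¹) := by group
    _ = (v^t)⁻¹ * ((v ^ t * u) * (cmt u v ^ t)⁻¹) := by rw [← h]
    _ = u * (cmt u v ^ t)⁻¹ := by group
  have e : ((v ^ t)⁻¹ * u * v ^ t) ^ s = (v ^ t)⁻¹ * u ^ s * v ^ t := by
    rw [show (v^t)⁻¹ * u * v ^ t = (v^t)⁻¹ * u * ((v^t)⁻¹)⁻¹ by group, conj_zpow]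
    group
  calc u ^ s * v ^ t = v ^ t * ((v ^ t)⁻¹ * u ^ s * v ^ t) := by group
  _ = v ^ t * (((v ^ t)⁻¹ * u * v ^ t) ^ s) := by rw [e]
  _ = v ^ t * ((u * cmt u v ^ (-t)) ^ s) := by rw [hconj]
  _ = v ^ t * (u ^ s * (cmt u v ^ (-t)) ^ s) := by
        rw [((cmt_central hG u u v).zpow_right (-t)).mul_zpow]
  _ = v ^ t * u ^ s * cmt u v ^ (-(s * t)) := by
        rw [← zpow_mul, show -t * s = -(s*t) by ring, mul_assoc]



def Pl {m : ℕ} (b : Fin m → G) (h : Fin m → ℤ) : G := (List.ofFn fun i => b i ^ h i).prod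

lemma listOnes {m : ℕ} (f : Fin m → G) (hf : ∀ j, f j = 1) : (List.ofFn f).prod = 1 := by
  apply List.prod_eq_one
  intro x hx
  obtain ⟨i, rfl⟩ := List.mem_ofFn.mp hx
  exact hf i

lemma listSingle {m : ℕ} (f : Fin m → G) (k : Fin m) (hf : ∀ j, j ≠ k → f j = 1) :
    (List.ofFn f).prod = f k := by
  induction m with
  | zero => exact k.elim0
  | succ m ih =>
    rw [List.ofFn_succ, List.prod_cons]
    rcases Fin.eq_zero_or_eq_succ k with hk | ⟨j, hk⟩
    · subst hk
      rw [listOnes (fun i => f i.succ) (fun i => hf i.succ (Fin.succ_ne_zero i)), mul_one]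
    · subst hk
      rw [hf 0 (Fin.succ_ne_zero j).symm, one_mul]
      exact ih (fun i => f i.succ) j (fun i hi => hf i.succ (by simpa [Fin.succ_inj] using hi))

lemma prodMulC {m : ℕ} (f g : Fin m → G) (hg : ∀ i x, Commute x (g i)) :
    (List.ofFn fun i => f i * g i).prod = (List.ofFn f).prod * (List.ofFn g).prod := by
  induction m with
  | zero => simp
  | succ m ih =>
    rw [List.ofFn_succ, List.ofFn_succ (f := f), List.ofFn_succ (f := g),
      List.prod_cons, List.prod_cons, List.prod_cons]
    rw [ih (fun i => f i.succ) (fun i => g i.succ) (fun i x => hg i.succ x)]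
    set T := (List.ofFn fun i => f i.succ).prod
    set T' := (List.ofFn fun i => g i.succ).prod
    calc f 0 * g 0 * (T * T') = f 0 * ((g 0 * T) * T') := by simp [mul_assoc]
    _ = f 0 * ((T * g 0) * T') := by rw [← (hg 0 T).eq]
    _ = f 0 * T * (g 0 * T') := by simp [mul_assoc]

lemma Pl_add {m : ℕ} (b : Fin m → G) (h h' : Fin m → ℤ)
    (hc' : ∀ i x, Commute x (b i ^ h' i)) : Pl b h * Pl b h' = Pl b (h + h') := by
  rw [Pl, Pl, Pl, ← prodMulC _ _ hc']
  have e : (fun i => b i ^ (h + h') i) = fun i => b i ^ h i * b i ^ h' i := by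
    funext i; rw [Pi.add_apply, zpow_add]
  rw [e]

lemma Pl_zero {m : ℕ} (b : Fin m → G) : Pl b 0 = 1 := listOnes _ (by simp)

lemma Pl_single {m : ℕ} (b : Fin m → G) (k : Fin m) (t : ℤ) :
    Pl b (fun i => if i = k then t else 0) = b k ^ t := by
  rw [Pl, listSingle _ k (by intro j hj; simp [hj])]
  simp

lemma Pl_succ {m : ℕ} (b : Fin (m+1) → G) (h : Fin (m+1) → ℤ) :
    Pl b h = b 0 ^ h 0 * Pl (fun i => b i.succ) (fun i => h i.succ) := by
  rw [Pl, List.ofFn_succ, List.prod_cons]; rfl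

lemma move {m : ℕ} (hG : ∀ x y : G, (x * y) ^ 2 = (y * x) ^ 2) (K : Subgroup G)
    (b : Fin m → G) (g : G) (hg : ∀ i, cmt (b i) g ∈ K) (h : Fin m → ℤ) (t : ℤ) :
    ∃ w ∈ K, Pl b h * g ^ t = g ^ t * Pl b h * w := by
  induction m with
  | zero => exact ⟨1, one_mem K, by simp [Pl]⟩
  | succ m ih =>
    obtain ⟨w, hw, hEq⟩ := ih (fun i => b i.succ) (fun i => hg i.succ) (fun i => h i.succ)
    have h2 := szp2 hG (b 0) g (h 0) t
    refine ⟨cmt (b 0) g ^ (-(h 0 * t)) * w, mul_mem (K.zpow_mem (hg 0) _) hw, ?_⟩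
    rw [Pl_succ]
    set c0 := cmt (b 0) g
    set T := Pl (fun i => b i.succ) (fun i => h i.succ) with hT
    calc b 0 ^ h 0 * T * g ^ t = b 0 ^ h 0 * (T * g ^ t) := by rw [mul_assoc]
    _ = b 0 ^ h 0 * (g ^ t * T * w) := by rw [hEq]
    _ = (b 0 ^ h 0 * g ^ t) * (T * w) := by simp [mul_assoc]
    _ = (g ^ t * b 0 ^ h 0 * c0 ^ (-(h 0 * t))) * (T * w) := by rw [h2]
    _ = g ^ t * b 0 ^ h 0 * ((c0 ^ (-(h 0 * t)) * T) * w) := by simp [mul_assoc]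
    _ = g ^ t * b 0 ^ h 0 * ((T * c0 ^ (-(h 0 * t))) * w) := by
          rw [← ((cmt_central hG T (b 0) g).zpow_right _).eq]
    _ = g ^ t * (b 0 ^ h 0 * T) * (c0 ^ (-(h 0 * t)) * w) := by simp [mul_assoc]

lemma merge {m : ℕ} (hG : ∀ x y : G, (x * y) ^ 2 = (y * x) ^ 2) (K : Subgroup G)
    (hKc : ∀ w ∈ K, ∀ x : G, Commute x w)
    (b : Fin m → G) (hb : ∀ i j, cmt (b i) (b j) ∈ K) (h h' : Fin m → ℤ) :
    ∃ w ∈ K, Pl b h * Pl b h' = Pl b (h + h') * w := by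
  induction m with
  | zero => exact ⟨1, one_mem K, by simp [Pl]⟩
  | succ m ih =>
    obtain ⟨w, hw, hEq⟩ := ih (fun i => b i.succ) (fun i j => hb i.succ j.succ)
      (fun i => h i.succ) (fun i => h' i.succ)
    obtain ⟨w2, hw2, hEq2⟩ := move hG K (fun i => b i.succ) (b 0)
      (fun i => hb i.succ 0) (fun i => h i.succ) (h' 0)
    refine ⟨w * w2, mul_mem hw hw2, ?_⟩
    rw [Pl_succ b h, Pl_succ b h', Pl_succ b (h + h')]
    set T := Pl (fun i => b i.succ) (fun i => h i.succ) with hT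
    set T' := Pl (fun i => b i.succ) (fun i => h' i.succ) with hT'
    have htail : (fun i : Fin m => (h + h') i.succ)
        = (fun i => h i.succ) + (fun i => h' i.succ) := rfl
    calc (b 0 ^ h 0 * T) * (b 0 ^ h' 0 * T')
        = b 0 ^ h 0 * ((T * b 0 ^ (h' 0)) * T') := by simp [mul_assoc]
      _ = b 0 ^ h 0 * ((b 0 ^ (h' 0) * T * w2) * T') := by rw [hEq2]
      _ = (b 0 ^ h 0 * b 0 ^ h' 0) * (T * (w2 * T')) := by simp [mul_assoc]
      _ = (b 0 ^ h 0 * b 0 ^ h' 0) * (T * (T' * w2)) := by rw [← (hKc w2 hw2 T').eq]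
      _ = (b 0 ^ (h 0 + h' 0)) * ((T * T') * w2) := by rw [zpow_add]; simp [mul_assoc]
      _ = (b 0 ^ ((h + h') 0)) * ((Pl (fun i => b i.succ) (fun i : Fin m => (h + h') i.succ) * w) * w2) := by
            rw [htail, ← hEq]; rfl
      _ = b 0 ^ ((h + h') 0) * Pl (fun i => b i.succ) (fun i : Fin m => (h + h') i.succ) * (w * w2) := by
            simp [mul_assoc]

lemma Pl_inv {m : ℕ} (hG : ∀ x y : G, (x * y) ^ 2 = (y * x) ^ 2) (K : Subgroup G)
    (hKc : ∀ w ∈ K, ∀ x : G, Commute x w)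
    (b : Fin m → G) (hb : ∀ i j, cmt (b i) (b j) ∈ K) (h : Fin m → ℤ) :
    ∃ w ∈ K, (Pl b h)⁻¹ = Pl b (-h) * w := by
  obtain ⟨w, hw, hEq⟩ := merge hG K hKc b hb h (-h)
  have e : h + (-h) = 0 := by funext i; simp
  rw [e, Pl_zero, one_mul] at hEq
  exact ⟨w⁻¹, inv_mem hw, by rw [← hEq]; group⟩

def Efn {n : ℕ} (a : Fin n → G) (lam : Fin n → Fin n → ℕ) (i j : Fin n) : G :=
  if i < j then ((a i * a j) ^ 2) ^ lam i j else 1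

def Rfn {n : ℕ} (a : Fin n → G) (lam : Fin n → Fin n → ℕ) (i : Fin n) : G :=
  (List.ofFn (Efn a lam i)).prod

def Cfn {n : ℕ} (a : Fin n → G) (lam : Fin n → Fin n → ℕ) : G :=
  (List.ofFn (Rfn a lam)).prod

lemma Efn_central {n : ℕ} (hG : ∀ x y : G, (x * y) ^ 2 = (y * x) ^ 2)
    (a : Fin n → G) (lam : Fin n → Fin n → ℕ) (i j : Fin n) (x : G) :
    Commute x (Efn a lam i j) := by
  unfold Efn; split
  · exact (sc_hc hG x _).pow_right _
  · exact Commute.one_right x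

lemma Rfn_central {n : ℕ} (hG : ∀ x y : G, (x * y) ^ 2 = (y * x) ^ 2)
    (a : Fin n → G) (lam : Fin n → Fin n → ℕ) (i : Fin n) (x : G) :
    Commute x (Rfn a lam i) := by
  apply Commute.list_prod_right
  intro y hy
  obtain ⟨j, rfl⟩ := List.mem_ofFn.mp hy
  exact Efn_central hG a lam i j x

lemma Cfn_central {n : ℕ} (hG : ∀ x y : G, (x * y) ^ 2 = (y * x) ^ 2)
    (a : Fin n → G) (lam : Fin n → Fin n → ℕ) (x : G) :
    Commute x (Cfn a lam) := by
  apply Commute.list_prod_right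
  intro y hy
  obtain ⟨i, rfl⟩ := List.mem_ofFn.mp hy
  exact Rfn_central hG a lam i x

lemma Cfn_one {n : ℕ} (a : Fin n → G) (lam : Fin n → Fin n → ℕ)
    (h0 : ∀ i j, lam i j = 0) : Cfn a lam = 1 := by
  apply listOnes
  intro i
  apply listOnes
  intro j
  simp [Efn, h0]

lemma Cfn_single {n : ℕ} (a : Fin n → G) (i0 j0 : Fin n) (hij : i0 < j0) :
    Cfn a (fun i j => if i = i0 ∧ j = j0 then 1 else 0) = (a i0 * a j0) ^ 2 := by
  unfold Cfn
  rw [listSingle (Rfn a _) i0 ?rows]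
  · unfold Rfn
    rw [listSingle (Efn a _ i0) j0 ?cols]
    · simp [Efn, hij]
    · intro j hj; simp [Efn, hj]
  · intro i hi; apply listOnes; intro j; simp [Efn, hi]

lemma Cfn_mul {n : ℕ} (hG : ∀ x y : G, (x * y) ^ 2 = (y * x) ^ 2)
    (a : Fin n → G) (KE : Subgroup G) (hmem : ∀ i, a i ^ 2 ∈ KE)
    (lam lam' : Fin n → Fin n → ℕ)
    (h1 : ∀ i j, lam i j = 0 ∨ lam i j = 1) (h2 : ∀ i j, lam' i j = 0 ∨ lam' i j = 1) :
    ∃ w ∈ KE, Cfn a lam * Cfn a lam'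
      = w * Cfn a (fun i j => (lam i j + lam' i j) % 2) := by
  set lam'' : Fin n → Fin n → ℕ := fun i j => (lam i j + lam' i j) % 2 with hlam''
  set gg : Fin n → Fin n → G := fun i j =>
    if i < j ∧ lam i j = 1 ∧ lam' i j = 1 then (a i ^ 2) ^ 2 * (a j ^ 2) ^ 2 else 1 with hgg
  have key : ∀ i j : Fin n, (a i * a j) ^ 2 * (a i * a j) ^ 2 = (a i ^ 2) ^ 2 * (a j ^ 2) ^ 2 := by
    intro i j
    have p4 := pow4 hG (a i) (a j)
    calc (a i * a j) ^ 2 * (a i * a j) ^ 2 = (a i * a j) ^ 4 := by rw [← pow_add]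
    _ = a i ^ 4 * a j ^ 4 := p4
    _ = (a i ^ 2) ^ 2 * (a j ^ 2) ^ 2 := by rw [← pow_mul, ← pow_mul]
  have entry : ∀ i j, Efn a lam i j * Efn a lam' i j = gg i j * Efn a lam'' i j := by
    intro i j
    unfold Efn
    by_cases hij : i < j
    · rcases h1 i j with e1 | e1 <;> rcases h2 i j with e2 | e2 <;>
        simp [hgg, hlam'', e1, e2, hij, key i j]
    · simp [hgg, hij]
  have row : ∀ i, Rfn a lam i * Rfn a lam' i = (List.ofFn (gg i)).prod * Rfn a lam'' i := by
    intro i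
    unfold Rfn
    rw [← prodMulC (Efn a lam i) (Efn a lam' i) (fun j x => Efn_central hG a lam' i j x)]
    rw [show (fun j => Efn a lam i j * Efn a lam' i j) = fun j => gg i j * Efn a lam'' i j
        from funext (entry i)]
    rw [prodMulC (gg i) (Efn a lam'' i) (fun j x => Efn_central hG a lam'' i j x)]
  refine ⟨(List.ofFn fun i => (List.ofFn (gg i)).prod).prod, ?_, ?_⟩
  · apply Subgroup.list_prod_mem
    intro y hy
    obtain ⟨i, rfl⟩ := List.mem_ofFn.mp hy
    apply Subgroup.list_prod_mem
    intro z hz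
    obtain ⟨j, rfl⟩ := List.mem_ofFn.mp hz
    rw [hgg]
    dsimp only
    split
    · exact mul_mem (pow_mem (hmem i) 2) (pow_mem (hmem j) 2)
    · exact one_mem _
  · unfold Cfn
    rw [← prodMulC (Rfn a lam) (Rfn a lam') (fun i x => Rfn_central hG a lam' i x)]
    rw [show (fun i => Rfn a lam i * Rfn a lam' i)
        = fun i => (List.ofFn (gg i)).prod * Rfn a lam'' i from funext row]
    rw [prodMulC _ (Rfn a lam'') (fun i x => Rfn_central hG a lam'' i x)]

end

theorem stmt_9 {G : Type*} [Group G] (n : ℕ) (a : Fin n → G)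
    (hgen : Subgroup.closure (Set.range a) = ⊤)
    (hG : ∀ x y : G, (x * y) ^ 2 = (y * x) ^ 2) :
    ∀ x : G, ∃ (h : Fin n → ℤ) (lam : Fin n → Fin n → ℕ),
      (∀ i j : Fin n, lam i j = 0 ∨ lam i j = 1) ∧
      x = (List.ofFn (fun i => a i ^ h i)).prod *
          (List.ofFn (fun i : Fin n =>
            (List.ofFn (fun j : Fin n =>
              if i < j then ((a i * a j) ^ 2) ^ lam i j else 1)).prod)).prod := by
  intro x
  classical
  set S : Set G := (Set.range fun i : Fin n => a i ^ 2)
      ∪ (Set.range fun p : Fin n × Fin n => (a p.1 * a p.2) ^ 2) with hS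
  set K := Subgroup.closure S with hK
  set Ke := Subgroup.closure (Set.range fun i : Fin n => a i ^ 2) with hKe
  have hKc : ∀ w ∈ K, ∀ y : G, Commute y w := by
    have hle : K ≤ Subgroup.center G := by
      rw [hK]
      apply (Subgroup.closure_le _).mpr
      rintro z (⟨i, rfl⟩ | ⟨p, rfl⟩) <;>
        exact Subgroup.mem_center_iff.mpr (fun g => (sc_hc hG g _).eq)
    intro w hw y
    exact Subgroup.mem_center_iff.mp (hle hw) y
  have hKeK : Ke ≤ K := Subgroup.closure_mono Set.subset_union_left
  have hKec : ∀ w ∈ Ke, ∀ y : G, Commute y w := fun w hw => hKc w (hKeK hw)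
  have hsqK : ∀ i : Fin n, (a i) ^ 2 ∈ K := fun i => Subgroup.subset_closure (Or.inl ⟨i, rfl⟩)
  have hpairK : ∀ i j : Fin n, (a i * a j) ^ 2 ∈ K :=
    fun i j => Subgroup.subset_closure (Or.inr ⟨(i, j), rfl⟩)
  have hcmtK : ∀ i j : Fin n, cmt (a i) (a j) ∈ K :=
    fun i j => mul_mem (mul_mem (hpairK i j) (inv_mem (hsqK i))) (inv_mem (hsqK j))
  have hsqKe : ∀ i : Fin n, (a i) ^ 2 ∈ Ke := fun i => Subgroup.subset_closure ⟨i, rfl⟩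
  -- Phase 1
  have hP1 : ∃ h : Fin n → ℤ, ∃ z, z ∈ K ∧ x = Pl a h * z := by
    have hx : x ∈ Subgroup.closure (Set.range a) := by rw [hgen]; exact Subgroup.mem_top x
    refine Subgroup.closure_induction
      (p := fun y _ => ∃ h : Fin n → ℤ, ∃ z, z ∈ K ∧ y = Pl a h * z) ?_ ?_ ?_ ?_ hx
    · rintro y ⟨m, rfl⟩
      exact ⟨(fun i => if i = m then 1 else 0), 1, one_mem K,
        by rw [Pl_single, zpow_one, mul_one]⟩
    · exact ⟨0, 1, one_mem K, by rw [Pl_zero, one_mul]⟩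
    · rintro y z hy hz ⟨h1, z1, hz1, rfl⟩ ⟨h2, z2, hz2, rfl⟩
      obtain ⟨w, hw, hEq⟩ := merge hG K hKc a hcmtK h1 h2
      refine ⟨h1 + h2, w * (z1 * z2), mul_mem hw (mul_mem hz1 hz2), ?_⟩
      calc Pl a h1 * z1 * (Pl a h2 * z2) = Pl a h1 * ((z1 * Pl a h2) * z2) := by
            simp [mul_assoc]
      _ = Pl a h1 * ((Pl a h2 * z1) * z2) := by rw [(hKc z1 hz1 (Pl a h2)).eq]
      _ = (Pl a h1 * Pl a h2) * (z1 * z2) := by simp [mul_assoc]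
      _ = Pl a (h1 + h2) * (w * (z1 * z2)) := by rw [hEq]; simp [mul_assoc]
    · rintro y hy ⟨h1, z1, hz1, rfl⟩
      obtain ⟨w, hw, hEq⟩ := Pl_inv hG K hKc a hcmtK h1
      refine ⟨-h1, w * z1⁻¹, mul_mem hw (inv_mem hz1), ?_⟩
      calc (Pl a h1 * z1)⁻¹ = z1⁻¹ * (Pl a h1)⁻¹ := by group
      _ = (Pl a h1)⁻¹ * z1⁻¹ := by rw [← (hKc z1⁻¹ (inv_mem hz1) ((Pl a h1)⁻¹)).eq]
      _ = Pl a (-h1) * w * z1⁻¹ := by rw [hEq]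
      _ = Pl a (-h1) * (w * z1⁻¹) := by rw [mul_assoc]
  -- Ke elements are products of even powers of generators
  have hKeP : ∀ w ∈ Ke, ∃ e : Fin n → ℤ, (∀ i y, Commute y (a i ^ e i)) ∧ w = Pl a e := by
    intro w hw
    refine Subgroup.closure_induction
      (p := fun z _ => ∃ e : Fin n → ℤ, (∀ i y, Commute y (a i ^ e i)) ∧ z = Pl a e)
      ?_ ?_ ?_ ?_ hw
    · rintro z ⟨i, rfl⟩
      refine ⟨fun t => if t = i then 2 else 0, ?_, ?_⟩
      · intro t y
        rcases eq_or_ne t i with rfl | ht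
        · have e2 : (a t : G) ^ (if t = t then (2:ℤ) else 0) = a t ^ (2:ℕ) := by
            rw [if_pos rfl]; exact zpow_two (a t) ▸ (pow_two (a t)).symm ▸ rfl
          rw [e2]
          exact sc_hc hG y (a t)
        · simp [ht]
      · rw [Pl_single a i 2, show (2 : ℤ) = ((2 : ℕ) : ℤ) from rfl, zpow_natCast]
    · exact ⟨0, by simp, by rw [Pl_zero]⟩
    · rintro y z hy hz ⟨e, hce, rfl⟩ ⟨e', hce', rfl⟩
      exact ⟨e + e', fun i y => by
          rw [Pi.add_apply, zpow_add]; exact (hce i y).mul_right (hce' i y),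
        (Pl_add a e e' hce')⟩
    · rintro y hy ⟨e, hce, rfl⟩
      have hneg : ∀ i y, Commute y (a i ^ (-e) i) := fun i y => by
        rw [Pi.neg_apply, zpow_neg]; exact (hce i y).inv_right
      refine ⟨-e, hneg, ?_⟩
      have h2 := Pl_add a e (-e) hneg
      rw [show e + (-e) = 0 from by funext i; simp, Pl_zero] at h2
      exact inv_eq_of_mul_eq_one_right h2
  -- Phase 2
  have hKP : ∀ z ∈ K, ∃ w ∈ Ke, ∃ lam : Fin n → Fin n → ℕ,
      (∀ i j, lam i j = 0 ∨ lam i j = 1) ∧ z = w * Cfn a lam := by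
    intro z hz
    refine Subgroup.closure_induction
      (p := fun z _ => ∃ w ∈ Ke, ∃ lam : Fin n → Fin n → ℕ,
        (∀ i j, lam i j = 0 ∨ lam i j = 1) ∧ z = w * Cfn a lam) ?_ ?_ ?_ ?_ hz
    · rintro z (⟨i, rfl⟩ | ⟨⟨i, j⟩, rfl⟩)
      · exact ⟨a i ^ 2, hsqKe i, 0, fun _ _ => Or.inl rfl,
          by rw [Cfn_one a 0 (fun _ _ => rfl), mul_one]⟩
      · rcases lt_trichotomy i j with hij | rfl | hij
        · refine ⟨1, one_mem _, fun s t => if s = i ∧ t = j then 1 else 0, ?_, ?_⟩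
          · intro s t; by_cases h : s = i ∧ t = j <;> simp [h]
          · rw [Cfn_single a i j hij, one_mul]
        · refine ⟨(a i ^ 2) ^ 2, pow_mem (hsqKe i) 2, 0, fun _ _ => Or.inl rfl, ?_⟩
          show (a i * a i) ^ 2 = (a i ^ 2) ^ 2 * Cfn a 0
          rw [Cfn_one a 0 (fun _ _ => rfl), mul_one, ← pow_two (a i)]
        · refine ⟨1, one_mem _, fun s t => if s = j ∧ t = i then 1 else 0, ?_, ?_⟩
          · intro s t; by_cases h : s = j ∧ t = i <;> simp [h]
          · rw [Cfn_single a j i hij, one_mul]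
            exact hG (a i) (a j)
    · exact ⟨1, one_mem _, 0, fun _ _ => Or.inl rfl,
        by rw [Cfn_one a 0 (fun _ _ => rfl), mul_one]⟩
    · rintro y z hy hz ⟨w, hw, lam, h01, rfl⟩ ⟨w', hw', lam', h01', rfl⟩
      obtain ⟨w2, hw2, hEq⟩ := Cfn_mul hG a Ke hsqKe lam lam' h01 h01'
      refine ⟨w * (w' * w2), mul_mem hw (mul_mem hw' hw2),
        fun i j => (lam i j + lam' i j) % 2, fun i j => by dsimp only; omega, ?_⟩
      calc w * Cfn a lam * (w' * Cfn a lam')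
          = w * ((Cfn a lam * w') * Cfn a lam') := by simp [mul_assoc]
      _ = w * ((w' * Cfn a lam) * Cfn a lam') := by
            rw [← (Cfn_central hG a lam w').eq]
      _ = (w * w') * (Cfn a lam * Cfn a lam') := by simp [mul_assoc]
      _ = (w * w') * (w2 * Cfn a (fun i j => (lam i j + lam' i j) % 2)) := by rw [hEq]
      _ = w * (w' * w2) * Cfn a (fun i j => (lam i j + lam' i j) % 2) := by
            simp [mul_assoc]
    · rintro y hy ⟨w, hw, lam, h01, rfl⟩
      obtain ⟨w2, hw2, hEq⟩ := Cfn_mul hG a Ke hsqKe lam lam h01 h01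
      have hzero : ∀ i j, (lam i j + lam i j) % 2 = 0 := by
        intro i j; rcases h01 i j with h | h <;> rw [h]
      rw [Cfn_one a _ hzero, mul_one] at hEq
      refine ⟨w2⁻¹ * w⁻¹, mul_mem (inv_mem hw2) (inv_mem hw), lam, h01, ?_⟩
      have hCinv : (Cfn a lam)⁻¹ = w2⁻¹ * Cfn a lam := by rw [← hEq]; group
      calc (w * Cfn a lam)⁻¹ = (Cfn a lam)⁻¹ * w⁻¹ := by group
      _ = (w2⁻¹ * Cfn a lam) * w⁻¹ := by rw [hCinv]
      _ = w2⁻¹ * (Cfn a lam * w⁻¹) := by rw [mul_assoc]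
      _ = w2⁻¹ * (w⁻¹ * Cfn a lam) := by rw [← (Cfn_central hG a lam w⁻¹).eq]
      _ = w2⁻¹ * w⁻¹ * Cfn a lam := by rw [mul_assoc]
  -- assemble
  obtain ⟨h1, z, hzK, hx1⟩ := hP1
  obtain ⟨w, hwKe, lam, hlam01, hzw⟩ := hKP z hzK
  obtain ⟨e, hce, hwPl⟩ := hKeP w hwKe
  refine ⟨h1 + e, lam, hlam01, ?_⟩
  show x = Pl a (h1 + e) * Cfn a lam
  rw [hx1, hzw, hwPl]
  calc Pl a h1 * (Pl a e * Cfn a lam) = (Pl a h1 * Pl a e) * Cfn a lam := by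
        rw [mul_assoc]
  _ = Pl a (h1 + e) * Cfn a lam := by rw [Pl_add a h1 e hce]
end

section
/- Let G be a square commutative group. Then the quotient group G / Z(G) of G by its center is commutative; equivalently, for all x, y ∈ G the commutator x*y*x⁻¹*y⁻¹ lies in the center of G. -/
theorem stmt_10 {G : Type*} [Group G]
    (hG : ∀ x y : G, (x * y) ^ 2 = (y * x) ^ 2) :
    ∀ x y : G, x * y * x⁻¹ * y⁻¹ ∈ Subgroup.center G := by
  -- Every square is central
  have hsq : ∀ a g : G, g * a ^ 2 = a ^ 2 * g := by
    intro a g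
    have h := hG g (g⁻¹ * a)
    have h1 : g * (g⁻¹ * a) = a := by group
    have h2 : (g⁻¹ * a * g) ^ 2 = g⁻¹ * a ^ 2 * g := by
      simp [pow_two, mul_assoc]
    rw [h1, h2] at h
    calc g * a ^ 2 = g * (g⁻¹ * a ^ 2 * g) := by rw [← h]
      _ = a ^ 2 * g := by simp [mul_assoc]
  intro x y
  rw [Subgroup.mem_center_iff]
  intro g
  have key : (x * y) ^ 2 * x⁻¹ ^ 2 * y⁻¹ ^ 2 = x * y * x⁻¹ * y⁻¹ := by
    calc (x * y) ^ 2 * x⁻¹ ^ 2 * y⁻¹ ^ 2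
        = x * y * x * (y * x⁻¹ ^ 2) * y⁻¹ ^ 2 := by simp [pow_two, mul_assoc]
      _ = x * y * x * (x⁻¹ ^ 2 * y) * y⁻¹ ^ 2 := by rw [hsq x⁻¹ y]
      _ = x * y * x⁻¹ * (y * y⁻¹ ^ 2) := by simp [pow_two, mul_assoc]
      _ = x * y * x⁻¹ * (y⁻¹ ^ 2 * y) := by rw [hsq y⁻¹ y]
      _ = x * y * x⁻¹ * y⁻¹ := by simp [pow_two, mul_assoc]
  rw [← key]
  calc g * ((x * y) ^ 2 * x⁻¹ ^ 2 * y⁻¹ ^ 2)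
      = g * (x * y) ^ 2 * x⁻¹ ^ 2 * y⁻¹ ^ 2 := by simp [mul_assoc]
    _ = (x * y) ^ 2 * g * x⁻¹ ^ 2 * y⁻¹ ^ 2 := by rw [hsq (x * y) g]
    _ = (x * y) ^ 2 * (g * x⁻¹ ^ 2) * y⁻¹ ^ 2 := by rw [mul_assoc ((x*y)^2)]
    _ = (x * y) ^ 2 * (x⁻¹ ^ 2 * g) * y⁻¹ ^ 2 := by rw [hsq x⁻¹ g]
    _ = (x * y) ^ 2 * x⁻¹ ^ 2 * (g * y⁻¹ ^ 2) := by simp [mul_assoc]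
    _ = (x * y) ^ 2 * x⁻¹ ^ 2 * (y⁻¹ ^ 2 * g) := by rw [hsq y⁻¹ g]
    _ = (x * y) ^ 2 * x⁻¹ ^ 2 * y⁻¹ ^ 2 * g := by simp [mul_assoc]
end

section
/- Let G be a group generated by two elements a and b (i.e. Subgroup.closure {a, b} = ⊤). Then G is square commutative if and only if the quotient G / Z(G) of G by its center is commutative and (a*b)^2 = (b*a)^2. -/
open scoped commutatorElement

theorem stmt_11 {G : Type*} [Group G] (a b : G)
    (hgen : Subgroup.closure ({a, b} : Set G) = ⊤) :
    (∀ x y : G, (x * y) ^ 2 = (y * x) ^ 2) ↔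
      ((∀ x y : G ⧸ Subgroup.center G, x * y = y * x) ∧ (a * b) ^ 2 = (b * a) ^ 2) := by
  constructor
  · intro h
    refine ⟨?_, h a b⟩
    have hsq : ∀ x : G, x ^ 2 ∈ Subgroup.center G := by
      intro x
      rw [Subgroup.mem_center_iff]
      intro g
      have := h g (g⁻¹ * x)
      have h1 : g * (g⁻¹ * x) = x := by group
      have h2 : (g⁻¹ * x * g) ^ 2 = g⁻¹ * x ^ 2 * g := by
        simp only [pow_two]; group
      rw [h1, h2] at this
      calc g * x ^ 2 = g * (g⁻¹ * x ^ 2 * g) := by rw [← this]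
      _ = x ^ 2 * g := by group
    have h2 : ∀ q : G ⧸ Subgroup.center G, q * q = 1 := by
      intro q
      induction q using QuotientGroup.induction_on with
      | H g =>
        rw [← QuotientGroup.mk_mul, ← sq, QuotientGroup.eq_one_iff]
        exact hsq g
    intro x y
    have hinv : ∀ q : G ⧸ Subgroup.center G, q⁻¹ = q := fun q =>
      inv_eq_of_mul_eq_one_right (h2 q)
    calc x * y = (x * y)⁻¹ := (hinv _).symm
    _ = y⁻¹ * x⁻¹ := by rw [mul_inv_rev]
    _ = y * x := by rw [hinv, hinv]
  · rintro ⟨hq, hab⟩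
    have hZ : ∀ x y : G, ⁅x, y⁆ ∈ Subgroup.center G := by
      intro x y
      rw [← QuotientGroup.ker_mk' (Subgroup.center G), MonoidHom.mem_ker,
        map_commutatorElement, commutatorElement_eq_one_iff_mul_comm]
      exact hq _ _
    have hcomm : ∀ (g x y : G), Commute g ⁅x, y⁆ := fun g x y =>
      Subgroup.mem_center_iff.mp (hZ x y) g
    have hkey : ∀ x y : G, (y * x) ^ 2 = ⁅y, x⁆ ^ 2 * (x * y) ^ 2 := by
      intro x y
      have h1 : y * x = ⁅y, x⁆ * (x * y) := by group
      rw [h1, ((hcomm (x * y) y x).symm).mul_pow]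
    have hmulR : ∀ x y z : G, ⁅x, y * z⁆ = ⁅x, y⁆ * ⁅x, z⁆ := by
      intro x y z
      have hc := Subgroup.mem_center_iff.mp (hZ x z)
      calc ⁅x, y * z⁆ = x * y * x⁻¹ * (⁅x, z⁆ * y⁻¹) := by
            simp only [commutatorElement_def]; group
      _ = x * y * x⁻¹ * (y⁻¹ * ⁅x, z⁆) := by rw [← hc y⁻¹]
      _ = ⁅x, y⁆ * ⁅x, z⁆ := by simp only [commutatorElement_def]; group
    have hsymm : ∀ x y : G, ⁅x, y⁆ ^ 2 = 1 → ⁅y, x⁆ ^ 2 = 1 := by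
      intro x y hxy
      rw [← commutatorElement_inv, inv_pow, hxy, inv_one]
    have hinvR : ∀ x y : G, ⁅x, y⁆ ^ 2 = 1 → ⁅x, y⁻¹⁆ ^ 2 = 1 := by
      intro x y hxy
      have h1 : ⁅x, y * y⁻¹⁆ = ⁅x, y⁆ * ⁅x, y⁻¹⁆ := hmulR x y y⁻¹
      rw [mul_inv_cancel, commutatorElement_one_right] at h1
      have h2 : ⁅x, y⁆⁻¹ = ⁅x, y⁻¹⁆ := inv_eq_of_mul_eq_one_right h1.symm
      rw [← h2, inv_pow, hxy, inv_one]
    -- step 1: for fixed x with ⁅x,a⁆²=1 and ⁅x,b⁆²=1, conclude for all y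
    have hstep : ∀ x : G, ⁅x, a⁆ ^ 2 = 1 → ⁅x, b⁆ ^ 2 = 1 → ∀ y : G, ⁅x, y⁆ ^ 2 = 1 := by
      intro x hxa hxb y
      have hy : y ∈ Subgroup.closure ({a, b} : Set G) := by rw [hgen]; trivial
      induction hy using Subgroup.closure_induction with
      | mem z hz =>
        rcases hz with hz | hz
        · rw [hz]; exact hxa
        · rw [Set.mem_singleton_iff] at hz; rw [hz]; exact hxb
      | one => simp
      | mul u v hu hv hu2 hv2 =>
        rw [hmulR, (hcomm ⁅x, u⁆ x v).mul_pow, hu2, hv2, one_mul]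
      | inv u hu hu2 => exact hinvR x u hu2
    -- ⁅b,a⁆² = 1 from hab
    have hba : ⁅b, a⁆ ^ 2 = 1 := by
      have := hkey a b
      rw [← hab] at this
      exact right_eq_mul.mp this
    have hA : ∀ y : G, ⁅a, y⁆ ^ 2 = 1 :=
      hstep a (by simp) (hsymm b a hba)
    have hB : ∀ y : G, ⁅b, y⁆ ^ 2 = 1 :=
      hstep b hba (by simp)
    have hall : ∀ x y : G, ⁅x, y⁆ ^ 2 = 1 := fun x y =>
      hstep x (hsymm a x (hA x)) (hsymm b x (hB x)) y
    intro x y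
    rw [hkey x y, hall y x, one_mul]
end

section
/- Let G be a group. Then G is square commutative if and only if for all x, y ∈ G the commutator x*y*x⁻¹*y⁻¹ lies in the center of G and squares to the identity (equivalently, the quotient of G by the central subgroup Z_G^2 = {d ∈ Z(G) : d^2 = 1} is commutative). Moreover, if G is square commutative then for all x, y ∈ G there exists d ∈ Z(G) with d^2 = 1 and x*y = y*x*d. -/
private lemma aux_sq {G : Type*} [Group G]
    (h : ∀ x y : G, (x * y) ^ 2 = (y * x) ^ 2) (a : G) : a ^ 2 ∈ Subgroup.center G := by
  rw [Subgroup.mem_center_iff]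
  intro g
  have key := h g (g⁻¹ * a)
  have e1 : (g * (g⁻¹ * a)) ^ 2 = a ^ 2 := by simp [pow_two, mul_assoc]
  have e2 : ((g⁻¹ * a) * g) ^ 2 = g⁻¹ * a ^ 2 * g := by simp [pow_two, mul_assoc]
  rw [e1, e2] at key
  nth_rewrite 1 [key]
  simp [mul_assoc]

private lemma aux_comm {G : Type*} [Group G]
    (h : ∀ x y : G, (x * y) ^ 2 = (y * x) ^ 2) (x y : G) :
    x * y * x⁻¹ * y⁻¹ ∈ Subgroup.center G ∧ (x * y * x⁻¹ * y⁻¹) ^ 2 = 1 := by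
  have hx2 : ∀ g : G, g * x ^ 2 = x ^ 2 * g := Subgroup.mem_center_iff.mp (aux_sq h x)
  have key : x * y * x⁻¹ * y⁻¹ = (x * y) ^ 2 * (x ^ 2 * y ^ 2)⁻¹ := by
    rw [eq_mul_inv_iff_mul_eq]
    calc x * y * x⁻¹ * y⁻¹ * (x ^ 2 * y ^ 2)
        = x * y * x⁻¹ * (y⁻¹ * x ^ 2) * y ^ 2 := by simp [mul_assoc]
      _ = x * y * x⁻¹ * (x ^ 2 * y⁻¹) * y ^ 2 := by rw [hx2 y⁻¹]
      _ = (x * y) ^ 2 := by simp [pow_two, mul_assoc]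
  have hZ : x * y * x⁻¹ * y⁻¹ ∈ Subgroup.center G := by
    rw [key]
    exact mul_mem (aux_sq h (x * y))
      (inv_mem (mul_mem (aux_sq h x) (aux_sq h y)))
  refine ⟨hZ, ?_⟩
  have hc : ∀ g : G, g * (x * y * x⁻¹ * y⁻¹) = (x * y * x⁻¹ * y⁻¹) * g :=
    Subgroup.mem_center_iff.mp hZ
  calc (x * y * x⁻¹ * y⁻¹) ^ 2
      = ((x * y * x⁻¹ * y⁻¹) * (x * y)) * (y * x)⁻¹ := by simp [pow_two, mul_assoc, mul_inv_rev]
    _ = ((x * y) * (x * y * x⁻¹ * y⁻¹)) * (y * x)⁻¹ := by rw [← hc (x * y)]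
    _ = (x * y) ^ 2 * ((y * x) ^ 2)⁻¹ := by simp [pow_two, mul_assoc, mul_inv_rev]
    _ = 1 := by rw [h x y]; simp

theorem stmt_12 {G : Type*} [Group G] :
    ((∀ x y : G, (x * y) ^ 2 = (y * x) ^ 2) ↔
      (∀ x y : G, x * y * x⁻¹ * y⁻¹ ∈ Subgroup.center G ∧ (x * y * x⁻¹ * y⁻¹) ^ 2 = 1)) ∧
    ((∀ x y : G, (x * y) ^ 2 = (y * x) ^ 2) →
      ∀ x y : G, ∃ d : G, d ∈ Subgroup.center G ∧ d ^ 2 = 1 ∧ x * y = y * x * d) := by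
  constructor
  · constructor
    · intro h x y
      exact aux_comm h x y
    · intro h x y
      obtain ⟨hdZ, hd2⟩ := h x⁻¹ y⁻¹
      have hdc : ∀ g : G, g * (x⁻¹ * y⁻¹ * x⁻¹⁻¹ * y⁻¹⁻¹) = (x⁻¹ * y⁻¹ * x⁻¹⁻¹ * y⁻¹⁻¹) * g :=
        Subgroup.mem_center_iff.mp hdZ
      have hcomm : Commute (y * x) (x⁻¹ * y⁻¹ * x⁻¹⁻¹ * y⁻¹⁻¹) := hdc (y * x)
      have e : x * y = y * x * (x⁻¹ * y⁻¹ * x⁻¹⁻¹ * y⁻¹⁻¹) := by simp [mul_assoc]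
      rw [e, hcomm.mul_pow, hd2, mul_one]
  · intro h x y
    obtain ⟨hdZ, hd2⟩ := aux_comm h x⁻¹ y⁻¹
    exact ⟨x⁻¹ * y⁻¹ * x⁻¹⁻¹ * y⁻¹⁻¹, hdZ, hd2, by simp [mul_assoc]⟩
end

section
/- Let p be an odd prime and let G be a finite group of order p^n for some n ≥ 1. Then G is square commutative if and only if G is commutative. -/
theorem stmt_13 {G : Type*} [Group G] (p n : ℕ) (hp : p.Prime) (hodd : Odd p)
    (hn : 1 ≤ n) (hcard : Nat.card G = p ^ n) :
    (∀ x y : G, (x * y) ^ 2 = (y * x) ^ 2) ↔ (∀ x y : G, x * y = y * x) := by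
  constructor
  · intro h x y
    set m := orderOf (x * y) with hm
    have hfin : Finite G := Nat.finite_of_card_ne_zero (by rw [hcard]; exact (pow_pos hp.pos n).ne')
    have hdvd : m ∣ p ^ n := hm ▸ orderOf_dvd_natCard _ |>.trans (hcard ▸ dvd_refl _)
    have hmodd : Odd m := by
      rcases (Nat.dvd_prime_pow hp).mp hdvd with ⟨k, _, heq⟩
      rw [heq]; exact hodd.pow
    have hconj : orderOf (y * x) = m :=
      ((show SemiconjBy x⁻¹ (x * y) (y * x) by unfold SemiconjBy; group).orderOf_eq).symm
    obtain ⟨k, hk⟩ := hmodd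
    have hm1 : (x * y) ^ m = 1 := pow_orderOf_eq_one _
    have hm2 : (y * x) ^ m = 1 := by rw [← hconj]; exact pow_orderOf_eq_one _
    have h1 : (x * y) ^ (m + 1) = x * y := by rw [pow_succ, hm1, one_mul]
    have h2 : (y * x) ^ (m + 1) = y * x := by rw [pow_succ, hm2, one_mul]
    have : (x * y) ^ (m + 1) = (y * x) ^ (m + 1) := by
      have : m + 1 = 2 * (k + 1) := by omega
      rw [this, pow_mul, pow_mul, h x y]
    rw [h1, h2] at this
    exact this
  · intro h x y
    rw [h x y]
end

section
/- Let n be an even positive integer. If the dihedral group of order 2n (DihedralGroup n) is square commutative, then n = 2 or n = 4. -/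
theorem stmt_14 (n : ℕ) (hpos : 0 < n) (heven : Even n)
    (hsc : ∀ x y : DihedralGroup n, (x * y) ^ 2 = (y * x) ^ 2) :
    n = 2 ∨ n = 4 := by
  have h := hsc (.sr 0) (.sr 1)
  simp only [DihedralGroup.sr_mul_sr, sq, DihedralGroup.r_mul_r, DihedralGroup.r.injEq] at h
  have h4 : (4 : ZMod n) = 0 := by
    have : ((1 : ZMod n) - 0) + (1 - 0) - ((0 - 1) + (0 - 1)) = 0 := by rw [h]; ring
    linear_combination this
  have hdvd : n ∣ 4 := by
    have := (ZMod.natCast_eq_zero_iff 4 n).mp (by exact_mod_cast h4)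
    exact this
  have hle : n ≤ 4 := Nat.le_of_dvd (by norm_num) hdvd
  interval_cases n <;> simp_all [Nat.even_iff]
end

section
/- Let p and q be nonzero integers and let BS(p,q) = ⟨a, b | a^p * b = b * a^q⟩ be the Baumslag–Solitar group, realized as the presented group on two generators a, b with the single relator a^p * b * a^{-q} * b⁻¹. Then the image of the generator a in BS(p,q) has infinite order. -/
theorem stmt_16 (p q : ℤ) (hp : p ≠ 0) (hq : q ≠ 0) :
    ∀ n : ℕ, 0 < n →
      (PresentedGroup.of 0 :
          PresentedGroup ({FreeGroup.of 0 ^ p * FreeGroup.of 1 * FreeGroup.of 0 ^ (-q) *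
            (FreeGroup.of 1)⁻¹} : Set (FreeGroup (Fin 2)))) ^ n ≠ 1 := by
  intro n hn h1
  have hc : ((p : ℚ) / q) ≠ 0 :=
    div_ne_zero (Int.cast_ne_zero.mpr hp) (Int.cast_ne_zero.mpr hq)
  set f : Fin 2 → Equiv.Perm ℚ := ![Equiv.addRight 1, Equiv.mulRight₀ ((p : ℚ)/q) hc] with hf
  have hrel : ∀ r ∈ ({FreeGroup.of 0 ^ p * FreeGroup.of 1 * FreeGroup.of 0 ^ (-q) *
      (FreeGroup.of 1)⁻¹} : Set (FreeGroup (Fin 2))), FreeGroup.lift f r = 1 := by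
    intro r hr
    rcases hr with rfl
    simp only [map_mul, map_zpow, map_inv, FreeGroup.lift_apply_of, hf, Matrix.cons_val_zero,
      Matrix.cons_val_one, Matrix.head_cons, Equiv.zsmul_addRight, zsmul_eq_mul, mul_one,
      Equiv.Perm.inv_def]
    ext x
    simp only [Equiv.Perm.mul_apply, Equiv.Perm.one_apply, Equiv.coe_addRight,
      Equiv.mulRight₀_apply, Equiv.mulRight₀_symm_apply]
    field_simp
    push_cast
    ring
  have h2 : (PresentedGroup.toGroup hrel) ((PresentedGroup.of 0 : PresentedGroup _) ^ n) = 1 := by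
    rw [h1, map_one]
  rw [map_pow, PresentedGroup.toGroup.of] at h2
  have h3 : ((f 0) ^ n) 0 = (1 : Equiv.Perm ℚ) 0 := by rw [h2]
  simp [hf] at h3
  omega
end

section
/- Let G be a square commutative group and let a, b ∈ G satisfy a^p * b = b * a^q for nonzero integers p, q. If p and q are both odd, then a^{2(p-q)} = 1; if p is even or q is even, then a^{p-q} = 1. -/
theorem stmt_17 {G : Type*} [Group G]
    (hG : ∀ x y : G, (x * y) ^ 2 = (y * x) ^ 2)
    (a b : G) (p q : ℤ) (hp : p ≠ 0) (hq : q ≠ 0)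
    (hrel : a ^ p * b = b * a ^ q) :
    (Odd p ∧ Odd q → a ^ (2 * (p - q)) = 1) ∧
    (Even p ∨ Even q → a ^ (p - q) = 1) := by
  -- squares are central
  have hcen : ∀ u x : G, u ^ 2 * x = x * u ^ 2 := by
    intro u x
    have h := hG x (x⁻¹ * u)
    have h2 : u ^ 2 = x⁻¹ * u ^ 2 * x := by
      calc u ^ 2 = (x * (x⁻¹ * u)) ^ 2 := by simp
        _ = (x⁻¹ * u * x) ^ 2 := h
        _ = x⁻¹ * u ^ 2 * x := by
            simp [pow_two, mul_assoc]
    calc u ^ 2 * x = x * (x⁻¹ * u ^ 2 * x) * x⁻¹ * x := by group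
      _ = x * u ^ 2 * x⁻¹ * x := by rw [← h2]
      _ = x * u ^ 2 := by group
  have hcenz : ∀ (n : ℤ), Even n → ∀ x : G, a ^ n * x = x * a ^ n := by
    rintro n ⟨r, rfl⟩ x
    have : a ^ (r + r) = (a ^ r) ^ 2 := by rw [zpow_add, pow_two]
    rw [this]; exact hcen _ _
  -- reversed relation
  have hrel2 : a ^ q * b = b * a ^ p := by
    have h := hG (a ^ p) b
    rw [hrel] at h
    -- h : (b * a^q)^2 = (b * a^p)^2
    have h3 : a ^ q * (b * a ^ q) = a ^ p * (b * a ^ p) := by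
      have := h
      rw [pow_two, pow_two, mul_assoc, mul_assoc] at this
      exact mul_left_cancel this
    rw [← hrel, ← mul_assoc, ← zpow_add] at h3
    -- h3 : a^(q+p) * b = a^p * (b * a^p)
    have h4 : a ^ p * (a ^ q * b) = a ^ p * (b * a ^ p) := by
      rw [← mul_assoc, ← zpow_add, add_comm p q]; exact h3
    exact mul_left_cancel h4
  have key : ∀ m n : ℤ, a ^ m * b = b * a ^ n → a ^ n = b⁻¹ * a ^ m * b := by
    intro m n h
    rw [mul_assoc, h]; group
  refine ⟨?_, ?_⟩
  · rintro ⟨hop, hoq⟩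
    have hev : Even (p - q) := Odd.sub_odd hop hoq
    have h1 := key p q hrel
    have h2 := key q p hrel2
    have h3 : a ^ (p - q) = b⁻¹ * a ^ (q - p) * b := by
      calc a ^ (p - q) = a ^ p * (a ^ q)⁻¹ := by rw [zpow_sub]
        _ = (b⁻¹ * a ^ q * b) * (b⁻¹ * a ^ p * b)⁻¹ := by rw [← h1, ← h2]
        _ = b⁻¹ * (a ^ q * (a ^ p)⁻¹) * b := by group
        _ = b⁻¹ * a ^ (q - p) * b := by rw [zpow_sub]
    have h4 : a ^ (q - p) = (a ^ (p - q))⁻¹ := by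
      rw [← zpow_neg]; ring_nf
    have hcom : Commute (a ^ (p - q)) b := hcenz _ hev b
    have hc := hcom.inv_left.eq
    have h6 : a ^ (p - q) = (a ^ (p - q))⁻¹ := by
      conv_lhs => rw [h3, h4]
      rw [mul_assoc, hc]; group
    have h7 : a ^ (p - q) * a ^ (p - q) = 1 := by
      nth_rewrite 1 [h6]; group
    rw [two_mul, zpow_add]; exact h7
  · rintro (hep | heq)
    · have h1 : a ^ p * b = b * a ^ p := hcenz p hep b
      have h2 : a ^ p = a ^ q := mul_left_cancel (h1.symm.trans hrel)
      rw [zpow_sub, h2]; group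
    · have h1 : a ^ q * b = b * a ^ q := hcenz q heq b
      have h2 : a ^ p * b = a ^ q * b := by rw [hrel, h1]
      have h3 : a ^ p = a ^ q := mul_right_cancel h2
      rw [zpow_sub, h3]; group
end

section
/- Let p and q be positive integers and let BS(p,q) = ⟨a, b | a^p * b = b * a^q⟩ be the Baumslag–Solitar group, realized as the presented group on two generators a, b with the single relator a^p * b * a^{-q} * b⁻¹. Then BS(p,q) is square commutative if and only if p = 1 and q = 1. -/
private lemma addRight_pow_apply (n : ℕ) (x : ℚ) :
    ((Equiv.addRight (1 : ℚ)) ^ n) x = x + n := by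
  induction n with
  | zero => simp
  | succ n ih =>
    rw [pow_succ', Equiv.Perm.mul_apply, Equiv.coe_addRight, ih]
    push_cast; ring

theorem stmt_18 (p q : ℕ) (hp : 0 < p) (hq : 0 < q) :
    (∀ x y : PresentedGroup ({FreeGroup.of 0 ^ p * FreeGroup.of 1 * (FreeGroup.of 0 ^ q)⁻¹ *
        (FreeGroup.of 1)⁻¹} : Set (FreeGroup (Fin 2))),
      (x * y) ^ 2 = (y * x) ^ 2) ↔ (p = 1 ∧ q = 1) := by
  constructor
  · intro h
    -- Step 0: all squares are central.
    have hc : ∀ u x : PresentedGroup ({FreeGroup.of 0 ^ p * FreeGroup.of 1 *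
        (FreeGroup.of 0 ^ q)⁻¹ * (FreeGroup.of 1)⁻¹} : Set (FreeGroup (Fin 2))),
        u ^ 2 * x = x * u ^ 2 := by
      intro u x
      have h1 := h x (x⁻¹ * u)
      have h2 : u ^ 2 = x⁻¹ * u ^ 2 * x := by
        calc u ^ 2 = (x * (x⁻¹ * u)) ^ 2 := by rw [sq, sq]; group
        _ = ((x⁻¹ * u) * x) ^ 2 := h1
        _ = x⁻¹ * u ^ 2 * x := by rw [sq, sq]; group
      calc u ^ 2 * x = x * (x⁻¹ * u ^ 2 * x) := by group
      _ = x * u ^ 2 := by rw [← h2]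
    -- Step 1: affine representation over ℚ shows p = q.
    have hq0 : ((p : ℚ) / q) ≠ 0 := by positivity
    have hqQ : (q : ℚ) ≠ 0 := Nat.cast_ne_zero.mpr hq.ne'
    have hAB : (Equiv.addRight (1 : ℚ)) ^ p * Equiv.mulRight₀ ((p : ℚ) / q) hq0 =
        Equiv.mulRight₀ ((p : ℚ) / q) hq0 * (Equiv.addRight (1 : ℚ)) ^ q := by
      ext x
      simp only [Equiv.Perm.mul_apply, addRight_pow_apply, Equiv.mulRight₀_apply]
      field_simp
    have hrels : ∀ r ∈ ({FreeGroup.of 0 ^ p * FreeGroup.of 1 * (FreeGroup.of 0 ^ q)⁻¹ *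
        (FreeGroup.of 1)⁻¹} : Set (FreeGroup (Fin 2))),
        FreeGroup.lift (![Equiv.addRight (1 : ℚ), Equiv.mulRight₀ ((p : ℚ) / q) hq0] :
          Fin 2 → Equiv.Perm ℚ) r = 1 := by
      intro r hr
      rw [Set.mem_singleton_iff] at hr
      subst hr
      simp only [map_mul, map_pow, map_inv, FreeGroup.lift_apply_of, Matrix.cons_val_zero,
        Matrix.cons_val_one, Matrix.head_cons]
      rw [show (Equiv.addRight (1 : ℚ)) ^ p * Equiv.mulRight₀ ((p : ℚ) / q) hq0 *
          ((Equiv.addRight (1 : ℚ)) ^ q)⁻¹ * (Equiv.mulRight₀ ((p : ℚ) / q) hq0)⁻¹ =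
          ((Equiv.addRight (1 : ℚ)) ^ p * Equiv.mulRight₀ ((p : ℚ) / q) hq0) *
          (Equiv.mulRight₀ ((p : ℚ) / q) hq0 * (Equiv.addRight (1 : ℚ)) ^ q)⁻¹ by group, hAB]
      group
    have key := congrArg (PresentedGroup.toGroup hrels)
      (hc (PresentedGroup.of 0) (PresentedGroup.of 1))
    simp only [map_mul, map_pow, PresentedGroup.toGroup.of, Matrix.cons_val_zero,
      Matrix.cons_val_one, Matrix.head_cons] at key
    have key0 := congrArg (fun (e : Equiv.Perm ℚ) => e 0) key
    simp only [Equiv.Perm.mul_apply, addRight_pow_apply, Equiv.mulRight₀_apply] at key0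
    have hpqn : p = q := by
      field_simp at key0
      exact_mod_cast (show (p : ℚ) = q by push_cast at key0 ⊢; linarith)
    subst hpqn
    rcases Nat.even_or_odd p with he | ho
    · -- even case: map to Perm (Fin 3), contradiction.
      exfalso
      obtain ⟨k, hk⟩ := he
      have hσp : (Equiv.swap (0 : Fin 3) 1) ^ p = 1 := by
        have h2 : (Equiv.swap (0 : Fin 3) 1) ^ 2 = 1 := by decide
        rw [show p = 2 * k by omega, pow_mul, h2, one_pow]
      have hrels2 : ∀ r ∈ ({FreeGroup.of 0 ^ p * FreeGroup.of 1 * (FreeGroup.of 0 ^ p)⁻¹ *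
          (FreeGroup.of 1)⁻¹} : Set (FreeGroup (Fin 2))),
          FreeGroup.lift (![Equiv.swap (0 : Fin 3) 1, Equiv.swap (0 : Fin 3) 2] :
            Fin 2 → Equiv.Perm (Fin 3)) r = 1 := by
        intro r hr
        rw [Set.mem_singleton_iff] at hr
        subst hr
        simp only [map_mul, map_pow, map_inv, FreeGroup.lift_apply_of, Matrix.cons_val_zero,
          Matrix.cons_val_one, Matrix.head_cons, hσp]
        group
      have key2 := congrArg (PresentedGroup.toGroup hrels2)
        (h (PresentedGroup.of 0) (PresentedGroup.of 1))
      simp only [map_mul, map_pow, PresentedGroup.toGroup.of, Matrix.cons_val_zero,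
        Matrix.cons_val_one, Matrix.head_cons] at key2
      exact absurd key2 (by decide)
    · -- odd case: map to DihedralGroup p; get p ∣ 4, so p = 1.
      haveI : NeZero p := ⟨hp.ne'⟩
      have hσp : (DihedralGroup.r 1 : DihedralGroup p) ^ p = 1 := by
        rw [DihedralGroup.r_one_pow, ZMod.natCast_self, DihedralGroup.one_def]
      have hrels3 : ∀ r ∈ ({FreeGroup.of 0 ^ p * FreeGroup.of 1 * (FreeGroup.of 0 ^ p)⁻¹ *
          (FreeGroup.of 1)⁻¹} : Set (FreeGroup (Fin 2))),
          FreeGroup.lift (![DihedralGroup.r 1, DihedralGroup.sr 0] :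
            Fin 2 → DihedralGroup p) r = 1 := by
        intro r hr
        rw [Set.mem_singleton_iff] at hr
        subst hr
        simp only [map_mul, map_pow, map_inv, FreeGroup.lift_apply_of, Matrix.cons_val_zero,
          Matrix.cons_val_one, Matrix.head_cons, hσp]
        group
      have key3 := congrArg (PresentedGroup.toGroup hrels3)
        (hc (PresentedGroup.of 0) (PresentedGroup.of 1))
      simp only [map_mul, map_pow, PresentedGroup.toGroup.of, Matrix.cons_val_zero,
        Matrix.cons_val_one, Matrix.head_cons] at key3
      rw [show (DihedralGroup.r 1 : DihedralGroup p) ^ 2 = DihedralGroup.r 2 by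
            rw [DihedralGroup.r_one_pow]; norm_num,
          DihedralGroup.r_mul_sr, DihedralGroup.sr_mul_r] at key3
      have h42 : (0 : ZMod p) - 2 = 0 + 2 := by
        injection key3
      have h4 : ((4 : ℕ) : ZMod p) = 0 := by
        push_cast
        linear_combination -h42
      have hdvd : p ∣ 4 := (ZMod.natCast_eq_zero_iff 4 p).mp h4
      have hple : p ≤ 4 := Nat.le_of_dvd (by norm_num) hdvd
      have hodd := Nat.odd_iff.mp ho
      have hp1 : p = 1 := by interval_cases p <;> omega
      exact ⟨hp1, hp1⟩
  · rintro ⟨hp1, hq1⟩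
    subst hp1; subst hq1
    have hone : PresentedGroup.mk ({FreeGroup.of 0 ^ 1 * FreeGroup.of 1 *
        (FreeGroup.of 0 ^ 1)⁻¹ * (FreeGroup.of 1)⁻¹} : Set (FreeGroup (Fin 2)))
        (FreeGroup.of 0 ^ 1 * FreeGroup.of 1 * (FreeGroup.of 0 ^ 1)⁻¹ * (FreeGroup.of 1)⁻¹)
        = 1 := by
      apply (QuotientGroup.eq_one_iff _).mpr
      exact Subgroup.subset_normalClosure (by simp)
    have hcomm : (PresentedGroup.of 0 : PresentedGroup ({FreeGroup.of 0 ^ 1 * FreeGroup.of 1 *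
        (FreeGroup.of 0 ^ 1)⁻¹ * (FreeGroup.of 1)⁻¹} : Set (FreeGroup (Fin 2)))) *
        PresentedGroup.of 1 = PresentedGroup.of 1 * PresentedGroup.of 0 := by
      simp only [map_mul, map_inv, map_pow, pow_one] at hone
      have h3 := mul_inv_eq_one.mp hone
      exact mul_inv_eq_iff_eq_mul.mp h3
    have hkey : ∀ x y : PresentedGroup ({FreeGroup.of 0 ^ 1 * FreeGroup.of 1 *
        (FreeGroup.of 0 ^ 1)⁻¹ * (FreeGroup.of 1)⁻¹} : Set (FreeGroup (Fin 2))),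
        Commute x y := by
      intro x y
      have hx : x ∈ Subgroup.closure (Set.range (PresentedGroup.of : Fin 2 → _)) := by
        rw [PresentedGroup.closure_range_of]; trivial
      have hy : y ∈ Subgroup.closure (Set.range (PresentedGroup.of : Fin 2 → _)) := by
        rw [PresentedGroup.closure_range_of]; trivial
      induction hx, hy using Subgroup.closure_induction₂ with
      | mem a b ha hb =>
        obtain ⟨i, rfl⟩ := ha
        obtain ⟨j, rfl⟩ := hb
        fin_cases i <;> fin_cases j
        · rfl
        · exact hcomm
        · exact hcomm.symm
        · rfl
      | one_left b hb => exact Commute.one_left b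
      | one_right a ha => exact Commute.one_right a
      | mul_left a b c ha hb hc h₁ h₂ => exact h₁.mul_left h₂
      | mul_right a b c ha hb hc h₁ h₂ => exact h₁.mul_right h₂
      | inv_left a b ha hb h₁ => exact h₁.inv_left
      | inv_right a b ha hb h₁ => exact h₁.inv_right
    intro x y
    rw [hkey x y]
end

section
/- Let G be a group generated by two elements a and b (i.e. Subgroup.closure {a, b} = ⊤) satisfying a*b = b*a^j for some nonzero integer j. Then G is square commutative if and only if a^{2(j-1)} = 1 in case j is odd, and a^{j-1} = 1 in case j is even. -/
theorem stmt_19 {G : Type*} [Group G] (a b : G)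
    (hgen : Subgroup.closure ({a, b} : Set G) = ⊤)
    (j : ℤ) (hj : j ≠ 0) (hrel : a * b = b * a ^ j) :
    (∀ x y : G, (x * y) ^ 2 = (y * x) ^ 2) ↔
      ((Odd j → a ^ (2 * (j - 1)) = 1) ∧ (Even j → a ^ (j - 1) = 1)) := by
  have hc : b⁻¹ * a * b = a ^ j := by
    rw [mul_assoc, hrel, ← mul_assoc, inv_mul_cancel, one_mul]
  have hck : ∀ k : ℤ, b⁻¹ * a ^ k * b = a ^ (j * k) := by
    intro k
    have e : b⁻¹ * a ^ k * b = (b⁻¹ * a * b) ^ k := by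
      rw [show b⁻¹ * a * b = b⁻¹ * a * b⁻¹⁻¹ by rw [inv_inv], conj_zpow, inv_inv]
    rw [e, hc, ← zpow_mul, mul_comm j k]
  have ha_b : ∀ k : ℤ, a ^ k * b = b * a ^ (j * k) := by
    intro k; rw [← hck k]; group
  constructor
  · intro h
    -- squares are central
    have hsq : ∀ g x : G, x * g ^ 2 = g ^ 2 * x := by
      intro g x
      have hxy := h x (x⁻¹ * g)
      rw [mul_inv_cancel_left,
        show x⁻¹ * g * x = x⁻¹ * g * x⁻¹⁻¹ by rw [inv_inv], conj_pow, inv_inv] at hxy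
      -- hxy : g ^ 2 = x⁻¹ * g ^ 2 * x
      nth_rewrite 1 [hxy]
      group
    have e1 : a ^ (j + j) = a ^ (1 + 1 : ℤ) := by
      have hb := hsq a b
      have hA : b⁻¹ * a ^ 2 * b = a ^ 2 := by
        rw [mul_assoc, ← hb, ← mul_assoc, inv_mul_cancel, one_mul]
      have hB : b⁻¹ * a ^ 2 * b = a ^ (j + j) := by
        rw [sq, show b⁻¹ * (a * a) * b = (b⁻¹ * a * b) * (b⁻¹ * a * b) by group, hc,
          ← zpow_add]
      rw [← hB, hA, show (1 + 1 : ℤ) = ((2 : ℕ) : ℤ) by norm_num, zpow_natCast]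
    have h1 : a ^ (2 * (j - 1)) = 1 := by
      have e : a ^ (2 * (j - 1)) = a ^ (j + j) * (a ^ (1 + 1 : ℤ))⁻¹ := by
        rw [← zpow_neg, ← zpow_add]; congr 1; ring
      rw [e, e1, mul_inv_cancel]
    have hba : (b * a) ^ 2 = b * b * a ^ (j + 1) := by
      rw [sq, zpow_add_one]
      calc b * a * (b * a) = b * (a * b) * a := by group
        _ = b * (b * a ^ j) * a := by rw [hrel]
        _ = b * b * (a ^ j * a) := by group
    have hcb : b * a ^ (j + 1) = a ^ (j + 1) * b := by
      have hba2 : b * (b * a) ^ 2 = (b * a) ^ 2 * b := hsq (b * a) b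
      rw [hba] at hba2
      apply mul_left_cancel (a := b * b)
      calc b * b * (b * a ^ (j + 1)) = b * (b * b * a ^ (j + 1)) := by group
        _ = b * b * a ^ (j + 1) * b := hba2
        _ = b * b * (a ^ (j + 1) * b) := by group
    have h2' : a ^ (j * j - 1) = 1 := by
      have e : a ^ (j * (j + 1)) = a ^ (j + 1) := by
        rw [← hck (j + 1), mul_assoc, ← hcb, inv_mul_cancel_left]
      have e2 : a ^ (j * j - 1) = a ^ (j * (j + 1)) * (a ^ (j + 1))⁻¹ := by
        rw [← zpow_neg, ← zpow_add]; congr 1; ring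
      rw [e2, e, mul_inv_cancel]
    refine ⟨fun _ => h1, fun he => ?_⟩
    obtain ⟨c, hcj⟩ := he
    have e4 : a ^ (j - 1) = a ^ (j * j - 1) * (a ^ (2 * (j - 1))) ^ (-c) := by
      rw [← zpow_mul, ← zpow_add]; congr 1; rw [hcj]; ring
    rw [e4, h1, h2', one_mul, one_zpow]
  · rintro ⟨hodd, heven⟩
    have h1 : a ^ (2 * (j - 1)) = 1 := by
      rcases Int.even_or_odd j with he | ho
      · have ht := heven he
        calc a ^ (2 * (j - 1)) = (a ^ (j - 1)) ^ (2 : ℤ) := by rw [← zpow_mul]; congr 1; ring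
          _ = 1 := by rw [ht, one_zpow]
      · exact hodd ho
    have h2' : a ^ (j * j - 1) = 1 := by
      rcases Int.even_or_odd j with he | ho
      · have ht := heven he
        calc a ^ (j * j - 1) = (a ^ (j - 1)) ^ (j + 1) := by rw [← zpow_mul]; congr 1; ring
          _ = 1 := by rw [ht, one_zpow]
      · obtain ⟨t, ht⟩ := ho
        calc a ^ (j * j - 1) = (a ^ (2 * (j - 1))) ^ (t + 1) := by
              rw [← zpow_mul]; congr 1; rw [ht]; ring
          _ = 1 := by rw [h1, one_zpow]
    have h2 : a ^ (j * j) = a := by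
      calc a ^ (j * j) = a ^ (1 : ℤ) * a ^ (j * j - 1) := by rw [← zpow_add]; congr 1; ring
        _ = a := by rw [h2', mul_one, zpow_one]
    have h2k : ∀ k : ℤ, a ^ (j * (j * k)) = a ^ k := by
      intro k
      rw [show j * (j * k) = j * j * k by ring, zpow_mul, h2]
    have h3 : b * a ^ j * b⁻¹ = a := by rw [← hrel]; group
    have h3k : ∀ k : ℤ, b * a ^ k * b⁻¹ = a ^ (j * k) := by
      have e : ∀ k : ℤ, b * a ^ (j * k) * b⁻¹ = a ^ k := by
        intro k; rw [zpow_mul, ← conj_zpow, h3]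
      intro k
      calc b * a ^ k * b⁻¹ = b * a ^ (j * (j * k)) * b⁻¹ := by rw [h2k]
        _ = a ^ (j * k) := e (j * k)
    have hb_inv : ∀ k : ℤ, a ^ k * b⁻¹ = b⁻¹ * a ^ (j * k) := by
      intro k; rw [← h3k k]; group
    have step_up : ∀ m k t : ℤ, a ^ k * b ^ m = b ^ m * a ^ t →
        a ^ k * b ^ (m + 1) = b ^ (m + 1) * a ^ (j * t) := by
      intro m k t hmk
      rw [zpow_add_one, ← mul_assoc, hmk, mul_assoc, ha_b, mul_assoc]
    have step_down : ∀ m k t : ℤ, a ^ k * b ^ m = b ^ m * a ^ t →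
        a ^ k * b ^ (m - 1) = b ^ (m - 1) * a ^ (j * t) := by
      intro m k t hmk
      rw [zpow_sub_one, ← mul_assoc, hmk, mul_assoc, hb_inv, mul_assoc]
    have hmove : ∀ m k : ℤ, a ^ k * b ^ m = b ^ m * a ^ k ∨
        a ^ k * b ^ m = b ^ m * a ^ (j * k) := by
      intro m
      induction m using Int.induction_on with
      | zero => intro k; left; simp
      | succ i ih =>
        intro k
        rcases ih k with hcase | hcase
        · exact Or.inr (step_up _ _ _ hcase)
        · left
          have := step_up _ _ _ hcase
          rwa [h2k] at this
      | pred i ih =>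
        intro k
        rcases ih k with hcase | hcase
        · exact Or.inr (step_down _ _ _ hcase)
        · left
          have := step_down _ _ _ hcase
          rwa [h2k] at this
    have hH : ∀ g : G, ∃ m k : ℤ, g = b ^ m * a ^ k := by
      intro g
      have hg : g ∈ Subgroup.closure ({a, b} : Set G) := hgen ▸ Subgroup.mem_top g
      induction hg using Subgroup.closure_induction with
      | mem x hx =>
        rcases hx with rfl | rfl
        · exact ⟨0, 1, by simp⟩
        · exact ⟨1, 0, by simp⟩
      | one => exact ⟨0, 0, by simp⟩
      | mul x y hx hy ihx ihy =>
        obtain ⟨m, k, rfl⟩ := ihx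
        obtain ⟨m', k', rfl⟩ := ihy
        rcases hmove m' k with hcase | hcase
        · refine ⟨m + m', k + k', ?_⟩
          calc b ^ m * a ^ k * (b ^ m' * a ^ k') = b ^ m * (a ^ k * b ^ m') * a ^ k' := by group
            _ = b ^ m * (b ^ m' * a ^ k) * a ^ k' := by rw [hcase]
            _ = b ^ (m + m') * a ^ (k + k') := by rw [zpow_add, zpow_add]; group
        · refine ⟨m + m', j * k + k', ?_⟩
          calc b ^ m * a ^ k * (b ^ m' * a ^ k') = b ^ m * (a ^ k * b ^ m') * a ^ k' := by group
            _ = b ^ m * (b ^ m' * a ^ (j * k)) * a ^ k' := by rw [hcase]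
            _ = b ^ (m + m') * a ^ (j * k + k') := by rw [zpow_add, zpow_add]; group
      | inv x hx ihx =>
        obtain ⟨m, k, rfl⟩ := ihx
        rcases hmove (-m) (-k) with hcase | hcase
        · refine ⟨-m, -k, ?_⟩
          calc (b ^ m * a ^ k)⁻¹ = a ^ (-k) * b ^ (-m) := by group
            _ = b ^ (-m) * a ^ (-k) := hcase
        · refine ⟨-m, j * -k, ?_⟩
          calc (b ^ m * a ^ k)⁻¹ = a ^ (-k) * b ^ (-m) := by group
            _ = b ^ (-m) * a ^ (j * -k) := hcase
    have hab2 : Commute a (b * b) := by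
      have e : (b * b)⁻¹ * a * (b * b) = a := by
        calc (b * b)⁻¹ * a * (b * b) = b⁻¹ * (b⁻¹ * a * b) * b := by group
          _ = b⁻¹ * a ^ j * b := by rw [hc]
          _ = a ^ (j * j) := hck j
          _ = a := h2
      show a * (b * b) = (b * b) * a
      calc a * (b * b) = (b * b) * ((b * b)⁻¹ * a * (b * b)) := by group
        _ = (b * b) * a := by rw [e]
    have hab2m : ∀ m : ℤ, Commute a (b ^ (m + m)) := by
      intro m
      have hcom := hab2.zpow_right m
      rwa [(Commute.refl b).mul_zpow, ← zpow_add] at hcom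
    have hcen : ∀ c : G, Commute c a → Commute c b → ∀ x : G, Commute c x := by
      intro c hca hcb x
      have hx : x ∈ Subgroup.closure ({a, b} : Set G) := hgen ▸ Subgroup.mem_top x
      induction hx using Subgroup.closure_induction with
      | mem y hy => rcases hy with rfl | rfl; exacts [hca, hcb]
      | one => exact Commute.one_right c
      | mul y z _ _ iy iz => exact iy.mul_right iz
      | inv y _ iy => exact iy.inv_right
    have hkey : ∀ t : ℤ, a ^ (t * (j - 1)) = 1 → ∀ m : ℤ, ∀ x : G,
        Commute (b ^ (m + m) * a ^ t) x := by
      intro t ht m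
      have hjt : a ^ (j * t) = a ^ t := by
        calc a ^ (j * t) = a ^ t * a ^ (t * (j - 1)) := by rw [← zpow_add]; congr 1; ring
          _ = a ^ t := by rw [ht, mul_one]
      apply hcen
      · exact Commute.mul_left (hab2m m).symm ((Commute.refl a).zpow_left t)
      · refine Commute.mul_left ((Commute.refl b).zpow_left (m + m)) ?_
        show a ^ t * b = b * a ^ t
        rw [ha_b, hjt]
    have hsq2 : ∀ g x : G, Commute (g ^ 2) x := by
      intro g x
      obtain ⟨m, k, rfl⟩ := hH g
      rcases hmove m k with hcase | hcase
      · have hg2 : (b ^ m * a ^ k) ^ 2 = b ^ (m + m) * a ^ (k + k) := by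
          calc (b ^ m * a ^ k) ^ 2 = b ^ m * (a ^ k * b ^ m) * a ^ k := by rw [sq]; group
            _ = b ^ m * (b ^ m * a ^ k) * a ^ k := by rw [hcase]
            _ = b ^ (m + m) * a ^ (k + k) := by rw [zpow_add, zpow_add]; group
        rw [hg2]
        apply hkey
        rw [show (k + k) * (j - 1) = 2 * (j - 1) * k by ring, zpow_mul, h1, one_zpow]
      · have hg2 : (b ^ m * a ^ k) ^ 2 = b ^ (m + m) * a ^ (j * k + k) := by
          calc (b ^ m * a ^ k) ^ 2 = b ^ m * (a ^ k * b ^ m) * a ^ k := by rw [sq]; group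
            _ = b ^ m * (b ^ m * a ^ (j * k)) * a ^ k := by rw [hcase]
            _ = b ^ (m + m) * a ^ (j * k + k) := by rw [zpow_add, zpow_add]; group
        rw [hg2]
        apply hkey
        rw [show (j * k + k) * (j - 1) = (j * j - 1) * k by ring, zpow_mul, h2', one_zpow]
    intro x y
    have hcom := (hsq2 (x * y) x).eq
    have e : (y * x) ^ 2 = x⁻¹ * (x * y) ^ 2 * x := by
      rw [show y * x = x⁻¹ * (x * y) * x by group,
        show x⁻¹ * (x * y) * x = x⁻¹ * (x * y) * x⁻¹⁻¹ by rw [inv_inv], conj_pow, inv_inv]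
    rw [e, mul_assoc, hcom, inv_mul_cancel_left]
end
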